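/- arXiv:2109.07816 — 10 statements merged into one kernel-verified Lean document; each statement's English description precedes it below -/
import Mathlib

section
/- Let S be a compact topological space, let (M_i)_{i∈I} be a family of discrete abelian groups, and give M = ⊕_{i∈I} M_i the discrete topology. Then the natural map ⊕_{i∈I} C(S, M_i) → C(S, M) (sending a finitely supported family of continuous maps to their pointwise sum viewed as a map to the direct sum) is a group isomorphism. -/
/-!
The inverse map sends `f : C(S, ⨁ i, M i)` to the family of its components `s ↦ f s i`. This
family is finitely supported because `f`, being a continuous map from a compact space to a
discrete one, has finite range.
-/

open DirectSum

section

variable {I : Type*} [DecidableEq I] {S : Type*} [TopologicalSpace S] {M : I → Type*}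
  [∀ i, AddCommMonoid (M i)] [TopologicalSpace (⨁ i, M i)]

theorem ContinuousMap.exists_finset_forall_directSum_apply_eq_zero [CompactSpace S]
    [DiscreteTopology (⨁ i, M i)] (f : C(S, ⨁ i, M i)) :
    ∃ T : Finset I, ∀ s, ∀ i ∉ T, f s i = 0 := by
  classical
  have hfin : (Set.range f).Finite := (isCompact_range f.continuous).finite_of_discrete
  refine ⟨hfin.toFinset.sup fun v => v.support, fun s i hi => ?_⟩
  by_contra hne
  exact hi (Finset.le_sup (f := fun v => DFinsupp.support v) (hfin.mem_toFinset.2 ⟨s, rfl⟩)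
    (DFinsupp.mem_support_iff.2 hne))

variable [∀ i, TopologicalSpace (M i)] [∀ i, ContinuousAdd (M i)] [ContinuousAdd (⨁ i, M i)]

theorem DirectSum.toAddMonoid_compLeftContinuous_apply (hof : ∀ i, Continuous (of M i))
    (x : ⨁ i, C(S, M i)) (s : S) (j : I) :
    toAddMonoid (fun i => (of M i).compLeftContinuous S (hof i)) x s j = x j s := by
  induction x using DirectSum.induction_on with
  | zero => simp
  | of i f =>
    rw [toAddMonoid_of]
    change of M i (f s) j = of (fun i => C(S, M i)) i f j s
    by_cases h : i = j
    · subst h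
      rw [of_eq_same, of_eq_same]
    · rw [of_eq_of_ne _ _ _ (Ne.symm h), of_eq_of_ne _ _ _ (Ne.symm h)]
      rfl
  | add x y hx hy => simp [hx, hy]

theorem DirectSum.toAddMonoid_compLeftContinuous_injective (hof : ∀ i, Continuous (of M i)) :
    Function.Injective (toAddMonoid fun i => (of M i).compLeftContinuous S (hof i)) :=
  fun x y hxy => DFinsupp.ext fun j => ContinuousMap.ext fun s => by
    simpa only [toAddMonoid_compLeftContinuous_apply] using congr($hxy s j)

theorem DirectSum.toAddMonoid_compLeftContinuous_surjective [CompactSpace S]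
    [DiscreteTopology (⨁ i, M i)] (hof : ∀ i, Continuous (of M i)) :
    Function.Surjective (toAddMonoid fun i => (of M i).compLeftContinuous S (hof i)) := by
  classical
  intro f
  obtain ⟨T, hT⟩ := f.exists_finset_forall_directSum_apply_eq_zero
  let component (i : I) : C(S, M i) :=
    ⟨fun s => f s i,
      (continuous_of_discreteTopology (f := fun v : ⨁ i, M i => v i)).comp f.continuous⟩
  refine ⟨DFinsupp.mk T fun i => component i,
    ContinuousMap.ext fun s => DFinsupp.ext fun j => ?_⟩
  rw [toAddMonoid_compLeftContinuous_apply, DFinsupp.mk_apply]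
  by_cases hj : j ∈ T
  · simp [hj, component]
  · simp [hj, hT s j hj]

end

/-- For a compact space `S` and a family of discrete abelian groups `M i`, with the
direct sum `⨁ i, M i` also given the discrete topology, the natural map
`⨁ i, C(S, M i) → C(S, ⨁ i, M i)` is a group isomorphism (i.e. bijective). -/
theorem directSum_continuousMap_bijective
    {I : Type*} [DecidableEq I] {S : Type*} [TopologicalSpace S] [CompactSpace S]
    (M : I → Type*) [∀ i, AddCommGroup (M i)] [∀ i, TopologicalSpace (M i)]
    [∀ i, DiscreteTopology (M i)]
    [TopologicalSpace (⨁ i, M i)] [DiscreteTopology (⨁ i, M i)] :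
    Function.Bijective
      (DirectSum.toAddMonoid
        (fun i =>
          (DirectSum.of M i).compLeftContinuous S (continuous_of_discreteTopology) :
          ∀ i, C(S, M i) →+ C(S, ⨁ i, M i))) :=
  ⟨toAddMonoid_compLeftContinuous_injective _, toAddMonoid_compLeftContinuous_surjective _⟩
end

section
/- Let 0 → A → B → C → 0 be a short exact sequence of abelian groups where A, B, C are Hausdorff topological abelian groups, the maps are continuous, f : A → B is a closed map, and for every compact K ⊆ C there exists a compact B' ⊆ B with g(B') ⊇ K. Then for every compact Hausdorff space S that is projective in the category of compact Hausdorff spaces (extremally disconnected), the induced sequence 0 → C(S,A) → C(S,B) → C(S,C) → 0 of abelian groups is exact. -/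
/-!
Injectivity and exactness in the middle are pointwise statements, once one knows that a closed
injective continuous map is an embedding, so that a continuous map into its range lifts
continuously. For surjectivity, `h : C(S, C)` has compact range, which is covered by `g '' K`
for a compact `K ⊆ B`; then `g : K → g '' K` is a continuous surjection of compact Hausdorff
spaces, and projectivity of `S` lifts `h` through it.
-/

universe u v w

open Function Set Topology

theorem Topology.IsInducing.exists_continuousMap_comp_eq {S X Y : Type*} [TopologicalSpace S]
    [TopologicalSpace X] [TopologicalSpace Y] {f : X → Y} (hf : IsInducing f) (h : C(S, Y))
    (hh : range h ⊆ range f) : ∃ k : C(S, X), f ∘ k = h := by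
  choose k hk using fun s => hh (mem_range_self s)
  have hfk : f ∘ k = h := funext hk
  exact ⟨⟨k, hf.continuous_iff.2 (hfk ▸ h.continuous)⟩, hfk⟩

/-- `CompactT2.Projective` quantifies only over spaces in the universe of `S`; passing to
`ULift`s removes that restriction. -/
theorem ExtremallyDisconnected.exists_continuousMap_comp_eq {S : Type u} {X : Type v}
    {Z : Type w} [TopologicalSpace S] [CompactSpace S] [T2Space S] [ExtremallyDisconnected S]
    [TopologicalSpace X] [CompactSpace X] [T2Space X]
    [TopologicalSpace Z] [CompactSpace Z] [T2Space Z]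
    {f : S → Z} {g : X → Z} (hf : Continuous f) (hg : Continuous g) (hgs : Surjective g) :
    ∃ k : C(S, X), g ∘ k = f := by
  have : ExtremallyDisconnected (ULift.{max v w} S) :=
    extremallyDisconnected_of_homeo Homeomorph.ulift.symm
  obtain ⟨k, hk, hgk⟩ := CompactT2.ExtremallyDisconnected.projective (A := ULift.{max v w} S)
    (Y := ULift.{max u w} X) (Z := ULift.{max u v} Z)
    (f := ULift.up ∘ f ∘ ULift.down) (g := ULift.up ∘ g ∘ ULift.down)
    (continuous_uliftUp.comp (hf.comp continuous_uliftDown))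
    (continuous_uliftUp.comp (hg.comp continuous_uliftDown))
    (fun z => (hgs z.down).elim fun x hx => ⟨ULift.up x, congrArg ULift.up hx⟩)
  refine ⟨⟨ULift.down ∘ k ∘ ULift.up, continuous_uliftDown.comp (hk.comp continuous_uliftUp)⟩, ?_⟩
  funext s
  exact congrArg ULift.down (congrFun hgk (ULift.up s))

theorem ExtremallyDisconnected.exists_continuousMap_comp_eq_of_range_subset_image
    {S X Y : Type*} [TopologicalSpace S] [CompactSpace S] [T2Space S] [ExtremallyDisconnected S]
    [TopologicalSpace X] [T2Space X] [TopologicalSpace Y] [T2Space Y]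
    {g : X → Y} (hg : Continuous g) {K : Set X} (hK : IsCompact K) (h : C(S, Y))
    (hhK : range h ⊆ g '' K) : ∃ k : C(S, X), g ∘ k = h := by
  have : CompactSpace K := isCompact_iff_compactSpace.1 hK
  have : CompactSpace (g '' K) := isCompact_iff_compactSpace.1 (hK.image hg)
  obtain ⟨k, hk⟩ := exists_continuousMap_comp_eq
    (h.continuous.codRestrict fun s => hhK (mem_range_self s))
    ((hg.comp continuous_subtype_val).subtype_mk _) (imageFactorization_surjective (f := g))
  refine ⟨(ContinuousMap.mk Subtype.val continuous_subtype_val).comp k, ?_⟩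
  funext s
  exact congrArg Subtype.val (congrFun hk s)

theorem continuousMap_shortExact_general
    {A B C : Type*}
    [TopologicalSpace A] [AddCommGroup A] [IsTopologicalAddGroup A]
    [TopologicalSpace B] [AddCommGroup B] [IsTopologicalAddGroup B] [T2Space B]
    [TopologicalSpace C] [AddCommGroup C] [IsTopologicalAddGroup C] [T2Space C]
    (f : A →+ B) (hf : Continuous f) (g : B →+ C) (hg : Continuous g)
    (hinj : Function.Injective f)
    (hexact : Set.range f = {b | g b = 0})
    (hclosed : IsClosedMap f)
    (hcompact : ∀ K : Set C, IsCompact K → ∃ B' : Set B, IsCompact B' ∧ K ⊆ g '' B')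
    (S : Type*) [TopologicalSpace S] [CompactSpace S] [T2Space S]
    [ExtremallyDisconnected S] :
    Function.Injective (f.compLeftContinuous S hf : C(S, A) →+ C(S, B)) ∧
    (∀ h : C(S, B), (g.compLeftContinuous S hg) h = 0 ↔
      ∃ k : C(S, A), (f.compLeftContinuous S hf) k = h) ∧
    Function.Surjective (g.compLeftContinuous S hg : C(S, B) →+ C(S, C)) := by
  have hfind : IsInducing f :=
    (IsClosedEmbedding.of_continuous_injective_isClosedMap hf hinj hclosed).isInducing
  refine ⟨fun k₁ k₂ hk => ContinuousMap.ext fun s => hinj (ContinuousMap.congr_fun hk s),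
    fun h => ⟨fun hgh => ?_, ?_⟩, fun h => ?_⟩
  · have hrange : range h ⊆ range f := by
      rintro _ ⟨s, rfl⟩
      rw [hexact]
      exact ContinuousMap.congr_fun hgh s
    obtain ⟨k, hk⟩ := hfind.exists_continuousMap_comp_eq h hrange
    exact ⟨k, ContinuousMap.ext (congrFun hk)⟩
  · rintro ⟨k, rfl⟩
    ext s
    exact hexact.subset (mem_range_self (k s))
  · obtain ⟨K, hK, hhK⟩ := hcompact _ (isCompact_range h.continuous)
    obtain ⟨k, hk⟩ :=
      ExtremallyDisconnected.exists_continuousMap_comp_eq_of_range_subset_image hg hK h hhK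
    exact ⟨k, ContinuousMap.ext (congrFun hk)⟩

/-- Given a short exact sequence `0 → A → B → C → 0` of Hausdorff topological abelian
groups with continuous maps, where `f` is a closed map and every compact subset of `C`
is contained in the image of a compact subset of `B`, the induced sequence
`0 → C(S,A) → C(S,B) → C(S,C) → 0` is exact for every extremally disconnected compact
Hausdorff space `S`. -/
theorem continuousMap_shortExact
    {A B C : Type*}
    [TopologicalSpace A] [AddCommGroup A] [IsTopologicalAddGroup A] [T2Space A]
    [TopologicalSpace B] [AddCommGroup B] [IsTopologicalAddGroup B] [T2Space B]
    [TopologicalSpace C] [AddCommGroup C] [IsTopologicalAddGroup C] [T2Space C]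
    (f : A →+ B) (hf : Continuous f) (g : B →+ C) (hg : Continuous g)
    (hinj : Function.Injective f) (hsurj : Function.Surjective g)
    (hexact : Set.range f = {b | g b = 0})
    (hclosed : IsClosedMap f)
    (hcompact : ∀ K : Set C, IsCompact K → ∃ B' : Set B, IsCompact B' ∧ K ⊆ g '' B')
    (S : Type*) [TopologicalSpace S] [CompactSpace S] [T2Space S]
    [ExtremallyDisconnected S] :
    Function.Injective (f.compLeftContinuous S hf : C(S, A) →+ C(S, B)) ∧
    (∀ h : C(S, B), (g.compLeftContinuous S hg) h = 0 ↔
      ∃ k : C(S, A), (f.compLeftContinuous S hf) k = h) ∧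
    Function.Surjective (g.compLeftContinuous S hg : C(S, B) →+ C(S, C)) :=
  continuousMap_shortExact_general f hf g hg hinj hexact hclosed hcompact S
end

section
/- Let 0 < r < 1, c > 0, and fix δ ∈ (0,1). Define Z((T))_{r,≤c} = { (a_n)_{n∈ℤ} : a_n ∈ ℤ, a_n = 0 for n sufficiently negative, and Σ_n |a_n| r^n ≤ c }, with the metric induced by the T-adic valuation d(f,g) = δ^{v(f-g)} where v(h) = inf{n : h_n ≠ 0}. Then Z((T))_{r,≤c} is a compact topological space. -/
/-! Since `r < 1`, a nonzero integer coefficient `aₙ` with `|aₙ| rⁿ ≤ c` forces `n ≥ N₀` for some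
`N₀` depending only on `r` and `c`. Hence every basic `T`-adic open set is cut out by finitely many
coordinates, so the `T`-adic topology is coarser than the product topology of discrete `ℤ`'s, and
it suffices to show compactness in the latter. There `Z((T))_{r,≤c}` lies in the product of the
finite sets `{m : |m| rⁿ ≤ c}`, and it is closed because, for nonnegative terms, being summable with
sum `≤ c` means that every finite partial sum is `≤ c`. Tychonoff concludes. -/

/-- `Z((T))_{r,≤c}`: integer Laurent series `∑ aₙ Tⁿ` with support bounded below and
weighted bound `∑ |aₙ| rⁿ ≤ c`. -/
def ZTrc (r c : ℝ) : Set (ℤ → ℤ) :=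
  {a | (∃ N : ℤ, ∀ n < N, a n = 0) ∧
    Summable (fun n : ℤ => |(a n : ℝ)| * r ^ n) ∧
    ∑' n : ℤ, |(a n : ℝ)| * r ^ n ≤ c}

/-- The `T`-adic topology on `Z((T))_{r,≤c}` (the topology of the metric
`d(f,g) = δ^{v(f-g)}`): two series are close iff their coefficients agree up to a
large index, so the sets of series agreeing with a given one up to index `N` form a
basis. -/
def tadicTopology (r c : ℝ) : TopologicalSpace (ZTrc r c) :=
  TopologicalSpace.generateFrom
    {U | ∃ (f : ZTrc r c) (N : ℤ),
      U = {g : ZTrc r c | ∀ n ≤ N, (g : ℤ → ℤ) n = (f : ℤ → ℤ) n}}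

variable {r c : ℝ}

theorem Int.exists_eq_zero_of_abs_mul_zpow_le (hr0 : 0 < r) (hr1 : r < 1) (c : ℝ) :
    ∃ N₀ : ℤ, ∀ (m n : ℤ), n < N₀ → |(m : ℝ)| * r ^ n ≤ c → m = 0 := by
  obtain ⟨k, hk⟩ := pow_unbounded_of_one_lt c (one_lt_inv_iff₀.2 ⟨hr0, hr1⟩)
  refine ⟨-k, fun m n hn hle => ?_⟩
  by_contra hm
  have h_one_le : (1 : ℝ) ≤ |(m : ℝ)| := by
    rw [← Int.cast_abs]; exact_mod_cast Int.one_le_abs hm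
  have hc_lt : c < r ^ n :=
    calc c < r⁻¹ ^ k := hk
      _ = r ^ (-(k : ℤ)) := by rw [zpow_neg, zpow_natCast, inv_pow]
      _ ≤ r ^ n := zpow_le_zpow_right_of_le_one₀ hr0 hr1.le hn.le
  nlinarith [zpow_pos hr0 n]

theorem abs_mul_zpow_le_of_mem_ZTrc (hr0 : 0 ≤ r) {a : ℤ → ℤ} (ha : a ∈ ZTrc r c) (n : ℤ) :
    |(a n : ℝ)| * r ^ n ≤ c :=
  (ha.2.1.le_tsum n fun _ _ => by positivity).trans ha.2.2

theorem ZTrc_eq_setOf_forall_sum_le (hr0 : 0 < r) (hr1 : r < 1) :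
    ZTrc r c = {a | ∀ u : Finset ℤ, ∑ n ∈ u, |(a n : ℝ)| * r ^ n ≤ c} := by
  ext a
  refine ⟨fun ha u => (ha.2.1.sum_le_tsum u fun _ _ => by positivity).trans ha.2.2, fun ha => ?_⟩
  have hnonneg : 0 ≤ fun n : ℤ => |(a n : ℝ)| * r ^ n := fun n => by positivity
  have hsum : Summable fun n : ℤ => |(a n : ℝ)| * r ^ n := summable_of_sum_le hnonneg ha
  obtain ⟨N₀, hN₀⟩ := Int.exists_eq_zero_of_abs_mul_zpow_le hr0 hr1 c
  exact ⟨⟨N₀, fun n hn => hN₀ _ n hn (by simpa using ha {n})⟩, hsum,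
    hsum.tsum_le_of_sum_le ha⟩

theorem isClosed_ZTrc (hr0 : 0 < r) (hr1 : r < 1) : IsClosed (ZTrc r c) := by
  rw [ZTrc_eq_setOf_forall_sum_le hr0 hr1, Set.ofPred_forall]
  exact isClosed_iInter fun u => isClosed_le (by fun_prop) continuous_const

theorem isCompact_ZTrc (hr0 : 0 < r) (hr1 : r < 1) : IsCompact (ZTrc r c) := by
  refine (isCompact_univ_pi fun n => isCompact_closedBall (0 : ℤ) (c / r ^ n)).of_isClosed_subset
    (isClosed_ZTrc hr0 hr1) fun a ha n _ => ?_
  rw [Metric.mem_closedBall, Int.dist_eq, Int.cast_zero, sub_zero, le_div_iff₀ (zpow_pos hr0 n)]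
  exact abs_mul_zpow_le_of_mem_ZTrc hr0.le ha n

theorem isOpen_setOf_forall_le_coeff_eq {S : Set (ℤ → ℤ)} {N₀ : ℤ}
    (hS : ∀ a ∈ S, ∀ n < N₀, a n = 0) (f : S) (N : ℤ) :
    IsOpen {g : S | ∀ n ≤ N, (g : ℤ → ℤ) n = (f : ℤ → ℤ) n} := by
  have h_eq : {g : S | ∀ n ≤ N, (g : ℤ → ℤ) n = (f : ℤ → ℤ) n} =
      Subtype.val ⁻¹' (Set.Icc N₀ N).pi fun n => {(f : ℤ → ℤ) n} := by
    ext g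
    refine ⟨fun hg n hn => hg n hn.2, fun hg n hn => ?_⟩
    rcases lt_or_ge n N₀ with hlt | hge
    · rw [hS g g.2 n hlt, hS f f.2 n hlt]
    · exact hg n ⟨hge, hn⟩
  rw [h_eq]
  exact (isOpen_set_pi (Set.finite_Icc N₀ N) fun n _ => isOpen_discrete _).preimage
    continuous_subtype_val

theorem instTopologicalSpaceSubtype_le_tadicTopology (hr0 : 0 < r) (hr1 : r < 1) :
    instTopologicalSpaceSubtype ≤ tadicTopology r c := by
  obtain ⟨N₀, hN₀⟩ := Int.exists_eq_zero_of_abs_mul_zpow_le hr0 hr1 c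
  have hS : ∀ a ∈ ZTrc r c, ∀ n < N₀, a n = 0 := fun a ha n hn =>
    hN₀ _ n hn (abs_mul_zpow_le_of_mem_ZTrc hr0.le ha n)
  refine le_generateFrom fun U ⟨f, N, hU⟩ => ?_
  exact hU ▸ isOpen_setOf_forall_le_coeff_eq hS f N

theorem ZTrc_compactSpace_general (r c : ℝ) (hr0 : 0 < r) (hr1 : r < 1) :
    @CompactSpace (ZTrc r c) (tadicTopology r c) := by
  have : CompactSpace (ZTrc r c) := isCompact_iff_compactSpace.1 (isCompact_ZTrc hr0 hr1)
  exact @Function.Surjective.compactSpace _ _ _ (tadicTopology r c) _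
    (continuous_id_of_le (instTopologicalSpaceSubtype_le_tadicTopology hr0 hr1)) _
    Function.surjective_id

/-- For `0 < r < 1`, `c > 0` and `δ ∈ (0,1)`, the space `Z((T))_{r,≤c}` with the
`T`-adic topology is compact. -/
theorem ZTrc_compactSpace (r c δ : ℝ) (hr0 : 0 < r) (hr1 : r < 1) (hc : 0 < c)
    (hδ0 : 0 < δ) (hδ1 : δ < 1) :
    @CompactSpace (ZTrc r c) (tadicTopology r c) :=
  ZTrc_compactSpace_general r c hr0 hr1
end

section
/- Let 0 < r < 1 and c > 0. For each c < 1, the space Z((T))_{r,≤c} embeds into ℤ[[T]] (i.e., all elements have a_n = 0 for n < 0), and Z((T))_{r,≤c} is homeomorphic to the inverse limit of the finite discrete sets Z((T))^m_{r,≤c} = { (a_0,…,a_m) ∈ ℤ^{m+1} : Σ_{n=0}^m |a_n| r^n ≤ c }; in particular it is a profinite space. -/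
/-- The finite truncation sets: tuples `(a₀, …, a_m)` of integers with
`∑ |aₙ| rⁿ ≤ c`. -/
def ZTrcTrunc (r c : ℝ) (m : ℕ) : Set (Fin (m + 1) → ℤ) :=
  {v | ∑ i : Fin (m + 1), |((v i : ℤ) : ℝ)| * r ^ (i : ℕ) ≤ c}

open Finset Function Topology

variable {r c : ℝ}

namespace ZTrc

theorem coeff_eq_zero_of_neg (hr0 : 0 < r) (hr1 : r < 1) (hc1 : c < 1) {a : ℤ → ℤ}
    (ha : a ∈ ZTrc r c) {n : ℤ} (hn : n < 0) : a n = 0 := by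
  by_contra h
  obtain ⟨-, hs, hle⟩ := ha
  have h1 : (1 : ℝ) ≤ |(a n : ℝ)| := by exact_mod_cast Int.one_le_abs h
  have hrn : (1 : ℝ) < r ^ n := one_lt_zpow_of_neg₀ hr0 hr1 hn
  have hterm : |(a n : ℝ)| * r ^ n ≤ ∑' m : ℤ, |(a m : ℝ)| * r ^ m :=
    hs.le_tsum n fun m _ => by positivity
  nlinarith

theorem sum_range_le (hr0 : 0 ≤ r) {a : ℤ → ℤ} (ha : a ∈ ZTrc r c) (m : ℕ) :
    ∑ i ∈ range m, |(a i : ℝ)| * r ^ i ≤ c := by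
  obtain ⟨-, hs, hle⟩ := ha
  have := hs.sum_le_tsum ((range m).map Nat.castEmbedding) fun n _ => by positivity
  simpa [sum_map] using this.trans hle

theorem extend_mem_of_sum_range_le (hr0 : 0 ≤ r) {b : ℕ → ℤ}
    (hb : ∀ m, ∑ i ∈ range m, |(b i : ℝ)| * r ^ i ≤ c) :
    extend ((↑) : ℕ → ℤ) b 0 ∈ ZTrc r c := by
  have hterm : (fun n : ℤ => |((extend ((↑) : ℕ → ℤ) b 0 n : ℤ) : ℝ)| * r ^ n)
      = extend ((↑) : ℕ → ℤ) (fun k => |(b k : ℝ)| * r ^ k) 0 := by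
    funext n
    by_cases hn : ∃ k : ℕ, (k : ℤ) = n
    · obtain ⟨k, rfl⟩ := hn
      simp [Nat.cast_injective.extend_apply]
    · simp [extend_apply' _ _ _ hn]
  have hs : Summable fun k : ℕ => |(b k : ℝ)| * r ^ k :=
    summable_of_sum_range_le (fun _ => by positivity) hb
  refine ⟨⟨0, fun n hn => extend_apply' _ _ _ ?_⟩, ?_, ?_⟩
  · rintro ⟨k, rfl⟩
    omega
  · rw [hterm]
    exact (summable_extend_zero Nat.cast_injective).2 hs
  · rw [hterm, tsum_extend_zero Nat.cast_injective]
    exact hs.tsum_le_of_sum_range_le hb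

theorem truncate_mem (hr0 : 0 ≤ r) {a : ℤ → ℤ} (ha : a ∈ ZTrc r c) (m : ℕ) :
    (fun i : Fin (m + 1) => a (i : ℕ)) ∈ ZTrcTrunc r c m := by
  simpa [ZTrcTrunc, Fin.sum_univ_eq_sum_range (fun i => |(a i : ℝ)| * r ^ i)]
    using sum_range_le hr0 ha (m + 1)

end ZTrc

theorem ZTrcTrunc.finite (hr0 : 0 < r) (m : ℕ) : (ZTrcTrunc r c m).Finite := by
  refine (Set.Finite.pi fun i : Fin (m + 1) =>
    Set.finite_Icc (-⌈c / r ^ (i : ℕ)⌉ : ℤ) ⌈c / r ^ (i : ℕ)⌉).subset fun v hv i _ => ?_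
  have hle : |(v i : ℝ)| * r ^ (i : ℕ) ≤ c :=
    (single_le_sum (f := fun j : Fin (m + 1) => |(v j : ℝ)| * r ^ (j : ℕ))
      (fun j _ => by positivity) (mem_univ i)).trans hv
  have : |(v i : ℝ)| ≤ ⌈c / r ^ (i : ℕ)⌉ :=
    ((le_div_iff₀ (by positivity)).2 hle).trans (Int.le_ceil _)
  exact abs_le.1 (by exact_mod_cast this)

abbrev ZTrcLimit (r c : ℝ) : Type :=
  {x : ∀ m : ℕ, ZTrcTrunc r c m //
    ∀ (m : ℕ) (i : Fin (m + 1)),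
      (x (m + 1) : Fin (m + 2) → ℤ) i.castSucc = (x m : Fin (m + 1) → ℤ) i}

namespace ZTrcLimit

def coeff (x : ZTrcLimit r c) (k : ℕ) : ℤ :=
  (x.1 k : Fin (k + 1) → ℤ) (Fin.last k)

theorem apply_eq_coeff (x : ZTrcLimit r c) :
    ∀ (m : ℕ) (i : Fin (m + 1)), (x.1 m : Fin (m + 1) → ℤ) i = x.coeff i
  | 0, i => by rw [Fin.fin_one_eq_zero i]; rfl
  | m + 1, i => by
    rcases Fin.eq_castSucc_or_eq_last i with ⟨j, rfl⟩ | rfl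
    · rw [x.2 m j, apply_eq_coeff x m j]
      rfl
    · rfl

theorem sum_range_coeff_le (hr0 : 0 ≤ r) (x : ZTrcLimit r c) (m : ℕ) :
    ∑ i ∈ range m, |(x.coeff i : ℝ)| * r ^ i ≤ c :=
  calc ∑ i ∈ range m, |(x.coeff i : ℝ)| * r ^ i
      ≤ ∑ i ∈ range (m + 1), |(x.coeff i : ℝ)| * r ^ i :=
        sum_le_sum_of_subset_of_nonneg (range_subset_range.2 m.le_succ)
          fun _ _ _ => by positivity
    _ = ∑ i : Fin (m + 1), |((x.1 m : Fin (m + 1) → ℤ) i : ℝ)| * r ^ (i : ℕ) := by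
        simp only [apply_eq_coeff,
          Fin.sum_univ_eq_sum_range (fun i => |(x.coeff i : ℝ)| * r ^ i)]
    _ ≤ c := (x.1 m).2

theorem continuous_coeff (k : ℕ) : Continuous fun x : ZTrcLimit r c => x.coeff k :=
  (continuous_apply _).comp <| continuous_subtype_val.comp <|
    (continuous_apply k).comp continuous_subtype_val

end ZTrcLimit

namespace ZTrc

noncomputable def toLimit (hr0 : 0 ≤ r) (a : ZTrc r c) : ZTrcLimit r c :=
  ⟨fun m => ⟨fun i => a.1 (i : ℕ), truncate_mem hr0 a.2 m⟩, fun _ _ => rfl⟩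

noncomputable def ofLimit (hr0 : 0 ≤ r) (x : ZTrcLimit r c) : ZTrc r c :=
  ⟨extend (↑) x.coeff 0, extend_mem_of_sum_range_le hr0 (x.sum_range_coeff_le hr0)⟩

theorem continuous_toLimit (hr0 : 0 ≤ r) : Continuous (toLimit (c := c) hr0) := by
  refine (continuous_pi fun m => (continuous_pi fun i => ?_).subtype_mk _).subtype_mk _
  exact (continuous_apply _).comp continuous_subtype_val

theorem continuous_ofLimit (hr0 : 0 ≤ r) : Continuous (ofLimit (c := c) hr0) := by
  refine (continuous_pi fun n => ?_).subtype_mk _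
  by_cases hn : ∃ k : ℕ, (k : ℤ) = n
  · obtain ⟨k, rfl⟩ := hn
    simpa only [Nat.cast_injective.extend_apply] using ZTrcLimit.continuous_coeff k
  · simpa only [extend_apply' _ _ _ hn] using continuous_const

noncomputable def equivLimit (hr0 : 0 < r) (hr1 : r < 1) (hc1 : c < 1) :
    ZTrc r c ≃ ZTrcLimit r c where
  toFun := toLimit hr0.le
  invFun := ofLimit hr0.le
  left_inv a := by
    ext n
    by_cases hn : ∃ k : ℕ, (k : ℤ) = n
    · obtain ⟨k, rfl⟩ := hn
      exact Nat.cast_injective.extend_apply _ _ _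
    · have hneg : n < 0 := lt_of_not_ge fun h => hn ⟨n.toNat, Int.toNat_of_nonneg h⟩
      exact (extend_apply' _ _ _ hn).trans (coeff_eq_zero_of_neg hr0 hr1 hc1 a.2 hneg).symm
  right_inv x := by
    ext m i
    exact (Nat.cast_injective.extend_apply _ _ _).trans (x.apply_eq_coeff m i).symm

end ZTrc

theorem tadicTopology_eq_instTopologicalSpaceSubtype (hr0 : 0 < r) (hr1 : r < 1)
    (hc1 : c < 1) :
    tadicTopology r c = instTopologicalSpaceSubtype := by
  refine le_antisymm (continuous_iff_le_induced.1 ?_) (le_generateFrom ?_)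
  · let := tadicTopology r c
    refine continuous_pi fun n => continuous_discrete_rng.2 fun k =>
      isOpen_iff_forall_mem_open.2 fun g hg =>
      ⟨_, fun h hh => (hh n le_rfl).trans hg, TopologicalSpace.isOpen_generateFrom_of_mem
        ⟨g, n, rfl⟩, fun _ _ => rfl⟩
  · rintro _ ⟨f, N, rfl⟩
    have hcyl : {g : ZTrc r c | ∀ n ≤ N, (g : ℤ → ℤ) n = (f : ℤ → ℤ) n}
        = Subtype.val ⁻¹' (Set.Icc 0 N).pi fun n => {(f : ℤ → ℤ) n} := by
      ext g
      refine ⟨fun h n hn => h n hn.2, fun h n hn => ?_⟩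
      by_cases h0 : 0 ≤ n
      · exact h n ⟨h0, hn⟩
      · rw [ZTrc.coeff_eq_zero_of_neg hr0 hr1 hc1 g.2 (by omega),
          ZTrc.coeff_eq_zero_of_neg hr0 hr1 hc1 f.2 (by omega)]
    rw [hcyl]
    exact (isOpen_set_pi (Set.finite_Icc 0 N) fun _ _ => isOpen_discrete _).preimage
      continuous_subtype_val

namespace ZTrc

noncomputable def homeomorphLimit (hr0 : 0 < r) (hr1 : r < 1) (hc1 : c < 1) :
    @Homeomorph (ZTrc r c) (ZTrcLimit r c) (tadicTopology r c) inferInstance :=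
  @Homeomorph.mk _ _ (tadicTopology r c) _ (equivLimit hr0 hr1 hc1)
    (by
      rw [tadicTopology_eq_instTopologicalSpaceSubtype hr0 hr1 hc1]
      exact continuous_toLimit hr0.le)
    (by
      rw [tadicTopology_eq_instTopologicalSpaceSubtype hr0 hr1 hc1]
      exact continuous_ofLimit hr0.le)

end ZTrc

theorem ZTrc_profinite_general (r c : ℝ) (hr0 : 0 < r) (hr1 : r < 1)
    (hc1 : c < 1) :
    (∀ a ∈ ZTrc r c, ∀ n : ℤ, n < 0 → a n = 0) ∧
    (∀ m : ℕ, (ZTrcTrunc r c m).Finite) ∧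
    ∃ e : @Homeomorph (ZTrc r c)
        {x : ∀ m : ℕ, ZTrcTrunc r c m //
          ∀ (m : ℕ) (i : Fin (m + 1)),
            (x (m + 1) : Fin (m + 2) → ℤ) i.castSucc = (x m : Fin (m + 1) → ℤ) i}
        (tadicTopology r c) inferInstance,
      ∀ (a : ZTrc r c) (m : ℕ) (i : Fin (m + 1)),
        ((e a : ∀ m : ℕ, ZTrcTrunc r c m) m : Fin (m + 1) → ℤ) i
          = (a : ℤ → ℤ) ((i : ℕ) : ℤ) :=
  ⟨fun _ ha _ => ZTrc.coeff_eq_zero_of_neg hr0 hr1 hc1 ha, ZTrcTrunc.finite hr0,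
    ZTrc.homeomorphLimit hr0 hr1 hc1, fun _ _ _ => rfl⟩

/-- For `0 < r < 1` and `0 < c < 1`, every element of `Z((T))_{r,≤c}` is a power
series (coefficients vanish in negative degrees), each truncation set is finite, and
`Z((T))_{r,≤c}` with the `T`-adic topology is homeomorphic to the inverse limit of
the finite discrete truncation sets; in particular it is a profinite space. -/
theorem ZTrc_profinite (r c : ℝ) (hr0 : 0 < r) (hr1 : r < 1) (hc0 : 0 < c)
    (hc1 : c < 1) :
    (∀ a ∈ ZTrc r c, ∀ n : ℤ, n < 0 → a n = 0) ∧
    (∀ m : ℕ, (ZTrcTrunc r c m).Finite) ∧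
    ∃ e : @Homeomorph (ZTrc r c)
        {x : ∀ m : ℕ, ZTrcTrunc r c m //
          ∀ (m : ℕ) (i : Fin (m + 1)),
            (x (m + 1) : Fin (m + 2) → ℤ) i.castSucc = (x m : Fin (m + 1) → ℤ) i}
        (tadicTopology r c) inferInstance,
      ∀ (a : ZTrc r c) (m : ℕ) (i : Fin (m + 1)),
        ((e a : ∀ m : ℕ, ZTrcTrunc r c m) m : Fin (m + 1) → ℤ) i
          = (a : ℤ → ℤ) ((i : ℕ) : ℤ) :=
  ZTrc_profinite_general r c hr0 hr1 hc1
end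

section
/- Let 0 < r' < r < 1, c > 0, and fix δ ∈ (0,1). The evaluation map F : Z((T))_{r,≤c} → ℝ, Σ a_n T^n ↦ Σ a_n (r')^n, is well-defined (the series converges absolutely) and continuous with respect to the T-adic topology on the domain. Quantitatively, if f and g agree in all coefficients of index ≤ N, then |F(f) − F(g)| ≤ 2c (r'/r)^N / (1 − r'/r). -/
/-- Evaluation of a Laurent series at `r'`. -/
noncomputable def theta (r' : ℝ) (a : ℤ → ℤ) : ℝ := ∑' n : ℤ, (a n : ℝ) * r' ^ n

/-! Put `q = r'/r < 1`. Since `r'ⁿ = qⁿ rⁿ`, a series whose coefficients vanish below index `N`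
satisfies `∑ |xₙ| r'ⁿ ≤ q^N ∑ |xₙ| rⁿ`; this gives absolute convergence at `r'` (take `N` below the
support) and, applied to `f - g`, whose `r`-weighted norm is at most `2c`, the estimate
`|θ f - θ g| ≤ 2c q^N`. As `q^N → 0`, `θ` is continuous for the `T`-adic topology. -/

open Filter Topology

section WeightedSeries

variable {r r' : ℝ} {x : ℤ → ℝ} {N : ℤ}

lemma zpow_le_div_zpow_mul (h0 : 0 < r') (h1 : r' ≤ r) {n : ℤ} (hn : N ≤ n) :
    r' ^ n ≤ (r' / r) ^ N * r ^ n := by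
  have hr : 0 < r := h0.trans_le h1
  calc r' ^ n = (r' / r) ^ n * r ^ n := by rw [div_zpow, div_mul_cancel₀ _ (zpow_ne_zero n hr.ne')]
    _ ≤ (r' / r) ^ N * r ^ n := mul_le_mul_of_nonneg_right
      (zpow_le_zpow_right_of_le_one₀ (div_pos h0 hr) ((div_le_one hr).2 h1) hn) (by positivity)

lemma abs_mul_zpow_le_of_eq_zero (h0 : 0 < r') (h1 : r' ≤ r) (hx : ∀ n < N, x n = 0) (n : ℤ) :
    |x n| * r' ^ n ≤ (r' / r) ^ N * (|x n| * r ^ n) := by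
  rcases lt_or_ge n N with hn | hn
  · simp [hx n hn]
  · calc |x n| * r' ^ n ≤ |x n| * ((r' / r) ^ N * r ^ n) := by
          gcongr; exact zpow_le_div_zpow_mul h0 h1 hn
      _ = (r' / r) ^ N * (|x n| * r ^ n) := by ring

lemma summable_abs_mul_zpow_of_eq_zero (h0 : 0 < r') (h1 : r' ≤ r) (hx : ∀ n < N, x n = 0)
    (hs : Summable fun n => |x n| * r ^ n) : Summable fun n => |x n| * r' ^ n :=
  (hs.mul_left _).of_nonneg_of_le (fun n => by positivity) (abs_mul_zpow_le_of_eq_zero h0 h1 hx)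

lemma tsum_abs_mul_zpow_le_of_eq_zero (h0 : 0 < r') (h1 : r' ≤ r) (hx : ∀ n < N, x n = 0)
    (hs : Summable fun n => |x n| * r ^ n) :
    ∑' n, |x n| * r' ^ n ≤ (r' / r) ^ N * ∑' n, |x n| * r ^ n := by
  rw [← tsum_mul_left]
  exact (summable_abs_mul_zpow_of_eq_zero h0 h1 hx hs).tsum_le_tsum
    (abs_mul_zpow_le_of_eq_zero h0 h1 hx) (hs.mul_left _)

lemma abs_mul_zpow_eq (h0 : 0 < r') (n : ℤ) : |x n * r' ^ n| = |x n| * r' ^ n := by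
  rw [abs_mul, abs_of_pos (zpow_pos h0 n)]

lemma summable_mul_zpow_of_abs (h0 : 0 < r') (hs : Summable fun n => |x n| * r' ^ n) :
    Summable fun n => x n * r' ^ n :=
  .of_abs (by simpa only [abs_mul_zpow_eq h0] using hs)

lemma abs_tsum_mul_zpow_le (h0 : 0 < r') (hs : Summable fun n => |x n| * r' ^ n) :
    |∑' n, x n * r' ^ n| ≤ ∑' n, |x n| * r' ^ n := by
  simpa only [Real.norm_eq_abs, abs_mul_zpow_eq h0] using
    norm_tsum_le_tsum_norm (f := fun n => x n * r' ^ n)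
      (by simpa only [Real.norm_eq_abs, abs_mul_zpow_eq h0] using hs)

end WeightedSeries

section Evaluation

variable {r r' c : ℝ} {a b : ℤ → ℤ}

lemma summable_of_mem_ZTrc (h0 : 0 < r') (h1 : r' ≤ r) (ha : a ∈ ZTrc r c) :
    Summable fun n : ℤ => |(a n : ℝ)| * r' ^ n := by
  obtain ⟨⟨N, hN⟩, hs, -⟩ := ha
  exact summable_abs_mul_zpow_of_eq_zero h0 h1 (N := N) (fun n hn => by simp [hN n hn]) hs

lemma summable_abs_sub_mul_zpow_and_tsum_le (ha : a ∈ ZTrc r c) (hb : b ∈ ZTrc r c) (hr : 0 ≤ r) :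
    Summable (fun n : ℤ => |(a n : ℝ) - b n| * r ^ n) ∧
      ∑' n : ℤ, |(a n : ℝ) - b n| * r ^ n ≤ 2 * c := by
  obtain ⟨-, hsa, hca⟩ := ha
  obtain ⟨-, hsb, hcb⟩ := hb
  have hle : ∀ n : ℤ, |(a n : ℝ) - b n| * r ^ n ≤ |(a n : ℝ)| * r ^ n + |(b n : ℝ)| * r ^ n :=
    fun n => by rw [← add_mul]; gcongr; exact abs_sub _ _
  have hs := (hsa.add hsb).of_nonneg_of_le (fun n => by positivity) hle
  refine ⟨hs, ?_⟩
  calc ∑' n : ℤ, |(a n : ℝ) - b n| * r ^ n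
      ≤ ∑' n : ℤ, (|(a n : ℝ)| * r ^ n + |(b n : ℝ)| * r ^ n) := hs.tsum_le_tsum hle (hsa.add hsb)
    _ ≤ 2 * c := by rw [hsa.tsum_add hsb]; linarith

lemma abs_theta_sub_le (h0 : 0 < r') (h1 : r' ≤ r) (ha : a ∈ ZTrc r c) (hb : b ∈ ZTrc r c)
    {N : ℤ} (hab : ∀ n ≤ N, a n = b n) :
    |theta r' a - theta r' b| ≤ 2 * c * (r' / r) ^ N := by
  obtain ⟨hs, hsum⟩ := summable_abs_sub_mul_zpow_and_tsum_le ha hb (h0.le.trans h1)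
  have hx : ∀ n < N, (a n : ℝ) - b n = 0 := fun n hn => by simp [hab n hn.le]
  have hθ : theta r' a - theta r' b = ∑' n : ℤ, ((a n : ℝ) - b n) * r' ^ n := by
    rw [theta, theta, ← (summable_mul_zpow_of_abs h0 (summable_of_mem_ZTrc h0 h1 ha)).tsum_sub
      (summable_mul_zpow_of_abs h0 (summable_of_mem_ZTrc h0 h1 hb))]
    simp only [sub_mul]
  calc |theta r' a - theta r' b|
      ≤ ∑' n : ℤ, |(a n : ℝ) - b n| * r' ^ n :=
        hθ ▸ abs_tsum_mul_zpow_le h0 (summable_abs_mul_zpow_of_eq_zero h0 h1 hx hs)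
    _ ≤ (r' / r) ^ N * ∑' n : ℤ, |(a n : ℝ) - b n| * r ^ n :=
        tsum_abs_mul_zpow_le_of_eq_zero h0 h1 hx hs
    _ ≤ (r' / r) ^ N * (2 * c) :=
        mul_le_mul_of_nonneg_left hsum (zpow_nonneg (div_nonneg h0.le (h0.le.trans h1)) _)
    _ = 2 * c * (r' / r) ^ N := mul_comm _ _

end Evaluation

lemma continuous_tadicTopology_of_dist_le {r c : ℝ} {Y : Type*} [PseudoMetricSpace Y]
    {F : ZTrc r c → Y} {ε : ℕ → ℝ} (hε : Tendsto ε atTop (𝓝 0))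
    (hF : ∀ f g : ZTrc r c, ∀ N : ℕ, (∀ n ≤ (N : ℤ), (f : ℤ → ℤ) n = (g : ℤ → ℤ) n) →
      dist (F f) (F g) ≤ ε N) :
    @Continuous (ZTrc r c) Y (tadicTopology r c) _ F := by
  let := tadicTopology r c
  refine Metric.continuous_iff'.2 fun f η hη => ?_
  obtain ⟨N, hN⟩ := (hε.eventually (gt_mem_nhds hη)).exists
  have hopen : IsOpen {g : ZTrc r c | ∀ n ≤ (N : ℤ), (g : ℤ → ℤ) n = (f : ℤ → ℤ) n} :=
    TopologicalSpace.isOpen_generateFrom_of_mem ⟨f, N, rfl⟩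
  filter_upwards [hopen.mem_nhds fun _ _ => rfl] with g hg
  exact (hF g f N hg).trans_lt hN

theorem theta_welldefined_continuous_general (r r' c : ℝ) (h0 : 0 < r') (h1 : r' < r) :
    (∀ a ∈ ZTrc r c, Summable (fun n : ℤ => |(a n : ℝ)| * r' ^ n)) ∧
    @Continuous (ZTrc r c) ℝ (tadicTopology r c) _ (fun a => theta r' (a : ℤ → ℤ)) ∧
    (∀ f g : ZTrc r c, ∀ N : ℤ, (∀ n ≤ N, (f : ℤ → ℤ) n = (g : ℤ → ℤ) n) →
      |theta r' (f : ℤ → ℤ) - theta r' (g : ℤ → ℤ)|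
        ≤ 2 * c * (r' / r) ^ N / (1 - r' / r)) := by
  have hr : 0 < r := h0.trans h1
  have hq0 : 0 ≤ r' / r := (div_pos h0 hr).le
  have hq1 : r' / r < 1 := (div_lt_one hr).2 h1
  have hbound : ∀ f g : ZTrc r c, ∀ N : ℤ, (∀ n ≤ N, (f : ℤ → ℤ) n = (g : ℤ → ℤ) n) →
      |theta r' (f : ℤ → ℤ) - theta r' (g : ℤ → ℤ)| ≤ 2 * c * (r' / r) ^ N / (1 - r' / r) := by
    intro f g N hfg
    have h := abs_theta_sub_le h0 h1.le f.2 g.2 hfg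
    exact h.trans (le_div_self ((abs_nonneg _).trans h) (by linarith) (by linarith))
  have hlim : Tendsto (fun N : ℕ => 2 * c * (r' / r) ^ N / (1 - r' / r)) atTop (𝓝 0) := by
    simpa using ((tendsto_pow_atTop_nhds_zero_of_lt_one hq0 hq1).const_mul (2 * c)).div_const
      (1 - r' / r)
  refine ⟨fun a ha => summable_of_mem_ZTrc h0 h1.le ha,
    continuous_tadicTopology_of_dist_le hlim fun f g N hfg => ?_, hbound⟩
  simpa only [Real.dist_eq, zpow_natCast] using hbound f g N hfg

/-- For `0 < r' < r < 1` the evaluation map `θ : Z((T))_{r,≤c} → ℝ`,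
`∑ aₙ Tⁿ ↦ ∑ aₙ (r')ⁿ`, is well defined (the series converges absolutely) and
continuous for the `T`-adic topology; quantitatively, if `f` and `g` agree in all
coefficients of index `≤ N` then `|θ f − θ g| ≤ 2c (r'/r)^N / (1 − r'/r)`. -/
theorem theta_welldefined_continuous (r r' c δ : ℝ) (h0 : 0 < r') (h1 : r' < r)
    (h2 : r < 1) (hc : 0 < c) (hδ0 : 0 < δ) (hδ1 : δ < 1) :
    (∀ a ∈ ZTrc r c, Summable (fun n : ℤ => |(a n : ℝ)| * r' ^ n)) ∧
    @Continuous (ZTrc r c) ℝ (tadicTopology r c) _ (fun a => theta r' (a : ℤ → ℤ)) ∧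
    (∀ f g : ZTrc r c, ∀ N : ℤ, (∀ n ≤ N, (f : ℤ → ℤ) n = (g : ℤ → ℤ) n) →
      |theta r' (f : ℤ → ℤ) - theta r' (g : ℤ → ℤ)|
        ≤ 2 * c * (r' / r) ^ N / (1 - r' / r)) :=
  theta_welldefined_continuous_general r r' c h0 h1
end

section
/- Let 0 < r' < r < 1 and let K ⊆ ℝ be compact. Then there exists c > 0 such that every x ∈ K can be written as x = Σ_{n≫−∞} a_n (r')^n with a_n ∈ ℤ, |a_n| < 1 + 1/r' for all n, and Σ |a_n| r^n ≤ c. In particular K is contained in the image of the evaluation map θ_{r'} : Z((T))_{r,≤c} → ℝ. -/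
/-!
Greedy expansion in the non-integral base `1/r'`: iterating `s ↦ fract s / r'` from `t` and
taking integer parts as digits gives `t = ∑ dⱼ r'ʲ` with `0 ≤ dⱼ < 1/r'` for `j ≥ 1`, and
`|d₀| < 1 + 1/r'` as soon as `|t| < 1/r'`. Since `K` is bounded, one power `r' ^ N` with
`|x / r' ^ N| < 1/r'` serves every `x ∈ K`; the digits of `x / r' ^ N`, shifted to start at
`T ^ N`, are the required coefficients, and their `r`-norm is at most
`(1 + 1/r') r ^ N / (1 - r)` independently of `x`.
-/

open Filter Topology

theorem exists_hasSum_abs_mul_pow_le {d : ℕ → ℝ} {B r : ℝ} (hr0 : 0 ≤ r) (hr1 : r < 1)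
    (hd : ∀ j, |d j| ≤ B) : ∃ s ≤ B / (1 - r), HasSum (fun j ↦ |d j| * r ^ j) s := by
  have hgeom := (summable_geometric_of_lt_one hr0 hr1).mul_left B
  have hle (j : ℕ) : |d j| * r ^ j ≤ B * r ^ j :=
    mul_le_mul_of_nonneg_right (hd j) (pow_nonneg hr0 j)
  have hsum : Summable (fun j ↦ |d j| * r ^ j) :=
    hgeom.of_nonneg_of_le (fun j ↦ by positivity) hle
  refine ⟨_, ?_, hsum.hasSum⟩
  calc ∑' j, |d j| * r ^ j ≤ ∑' j, B * r ^ j := hsum.tsum_le_tsum hle hgeom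
    _ = B / (1 - r) := by rw [tsum_mul_left, tsum_geometric_of_lt_one hr0 hr1, div_eq_mul_inv]

noncomputable def betaOrbit (q t : ℝ) : ℕ → ℝ
  | 0 => t
  | j + 1 => Int.fract (betaOrbit q t j) / q

noncomputable def betaDigit (q t : ℝ) (j : ℕ) : ℤ :=
  ⌊betaOrbit q t j⌋

section BetaExpansion

variable {q t : ℝ}

theorem mul_betaOrbit_succ (hq : q ≠ 0) (j : ℕ) :
    q * betaOrbit q t (j + 1) = Int.fract (betaOrbit q t j) :=
  mul_div_cancel₀ _ hq

theorem betaOrbit_eq_betaDigit_add (hq : q ≠ 0) (j : ℕ) :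
    betaOrbit q t j = betaDigit q t j + q * betaOrbit q t (j + 1) := by
  rw [mul_betaOrbit_succ hq, betaDigit, Int.floor_add_fract]

theorem betaOrbit_succ_nonneg (hq : 0 ≤ q) (j : ℕ) : 0 ≤ betaOrbit q t (j + 1) :=
  div_nonneg (Int.fract_nonneg _) hq

theorem betaOrbit_succ_lt (hq : 0 < q) (j : ℕ) : betaOrbit q t (j + 1) < 1 / q :=
  div_lt_div_of_pos_right (Int.fract_lt_one _) hq

theorem abs_betaDigit_lt (hq : 0 < q) (ht : |t| < 1 / q) (j : ℕ) :
    |(betaDigit q t j : ℝ)| < 1 + 1 / q := by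
  cases j with
  | zero =>
    have hfloor_le : (⌊t⌋ : ℝ) ≤ t := Int.floor_le t
    have hfloor_gt : t - 1 < ⌊t⌋ := Int.sub_one_lt_floor t
    rw [betaDigit, betaOrbit, abs_lt]
    rw [abs_lt] at ht
    constructor <;> linarith
  | succ j =>
    have hdigit_nonneg : (0 : ℝ) ≤ betaDigit q t (j + 1) :=
      mod_cast Int.floor_nonneg.mpr (betaOrbit_succ_nonneg hq.le j)
    have hdigit_lt : (betaDigit q t (j + 1) : ℝ) < 1 / q :=
      (Int.floor_le _).trans_lt (betaOrbit_succ_lt hq j)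
    rw [abs_of_nonneg hdigit_nonneg]
    linarith

theorem sum_betaDigit_add_pow_mul_betaOrbit (hq : q ≠ 0) (j : ℕ) :
    ∑ i ∈ Finset.range j, (betaDigit q t i : ℝ) * q ^ i + q ^ j * betaOrbit q t j = t := by
  induction j with
  | zero => simp [betaOrbit]
  | succ j ih =>
    rw [Finset.sum_range_succ]
    linear_combination ih - q ^ j * betaOrbit_eq_betaDigit_add (t := t) hq j

theorem tendsto_pow_mul_betaOrbit (hq0 : 0 < q) (hq1 : q < 1) :
    Tendsto (fun j ↦ q ^ j * betaOrbit q t j) atTop (𝓝 0) := by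
  rw [← tendsto_add_atTop_iff_nat 1]
  have hformula (j : ℕ) :
      q ^ (j + 1) * betaOrbit q t (j + 1) = q ^ j * Int.fract (betaOrbit q t j) := by
    rw [pow_succ, mul_assoc, mul_betaOrbit_succ hq0.ne']
  simp only [hformula]
  refine squeeze_zero (fun j ↦ by positivity) (fun j ↦ ?_)
    (tendsto_pow_atTop_nhds_zero_of_lt_one hq0.le hq1)
  exact mul_le_of_le_one_right (by positivity) (Int.fract_lt_one _).le

theorem hasSum_betaDigit_mul_pow (hq0 : 0 < q) (hq1 : q < 1) (ht : |t| < 1 / q) :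
    HasSum (fun j ↦ (betaDigit q t j : ℝ) * q ^ j) t := by
  obtain ⟨_, -, habs⟩ :=
    exists_hasSum_abs_mul_pow_le hq0.le hq1 fun j ↦ (abs_betaDigit_lt hq0 ht j).le
  have hsum : Summable (fun j ↦ (betaDigit q t j : ℝ) * q ^ j) :=
    .of_norm (by simpa [Real.norm_eq_abs, abs_mul, abs_of_pos hq0] using habs.summable)
  rw [hsum.hasSum_iff_tendsto_nat]
  have hpartial (j : ℕ) :
      ∑ i ∈ Finset.range j, (betaDigit q t i : ℝ) * q ^ i = t - q ^ j * betaOrbit q t j :=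
    eq_sub_of_add_eq (sum_betaDigit_add_pow_mul_betaOrbit hq0.ne' j)
  simpa only [hpartial, sub_zero] using tendsto_const_nhds.sub (tendsto_pow_mul_betaOrbit hq0 hq1)

end BetaExpansion

/-- The coefficients of the Laurent series `T ^ N * ∑ d j * T ^ j`. -/
def laurentCoeff (N : ℤ) (d : ℕ → ℤ) (n : ℤ) : ℤ :=
  if N ≤ n then d (n - N).toNat else 0

theorem laurentCoeff_of_lt {N n : ℤ} (d : ℕ → ℤ) (hn : n < N) : laurentCoeff N d n = 0 :=
  if_neg (not_le.mpr hn)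

theorem laurentCoeff_add_natCast (N : ℤ) (d : ℕ → ℤ) (j : ℕ) :
    laurentCoeff N d (N + j) = d j := by
  simp [laurentCoeff]

theorem abs_laurentCoeff_lt {N : ℤ} {d : ℕ → ℤ} {B : ℝ} (hB : 0 < B)
    (hd : ∀ j, |(d j : ℝ)| < B) (n : ℤ) : |(laurentCoeff N d n : ℝ)| < B := by
  by_cases hn : N ≤ n
  · simpa [laurentCoeff, hn] using hd (n - N).toNat
  · simpa [laurentCoeff, hn] using hB

theorem hasSum_laurentCoeff_mul_zpow (N : ℤ) (d : ℕ → ℤ) {φ : ℤ → ℝ} (hφ : φ 0 = 0)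
    {ρ s : ℝ} (hρ : ρ ≠ 0) (h : HasSum (fun j : ℕ ↦ φ (d j) * ρ ^ j) s) :
    HasSum (fun n : ℤ ↦ φ (laurentCoeff N d n) * ρ ^ n) (ρ ^ N * s) := by
  have hinj : Function.Injective (fun j : ℕ ↦ N + j) := fun i j hij ↦ by simpa using hij
  rw [← hinj.hasSum_iff]
  · refine (h.mul_left (ρ ^ N)).congr_fun fun j ↦ ?_
    simp only [Function.comp_apply, laurentCoeff_add_natCast, zpow_add₀ hρ, zpow_natCast]
    ring
  · intro n hn
    have hlt : n < N := by
      by_contra! hle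
      exact hn ⟨(n - N).toNat, by simp only; omega⟩
    simp [laurentCoeff_of_lt d hlt, hφ]

theorem exists_zpow_pred_gt {q : ℝ} (hq0 : 0 < q) (hq1 : q < 1) (M : ℝ) :
    ∃ N : ℤ, M < q ^ (N - 1) := by
  obtain ⟨k, hk⟩ := pow_unbounded_of_one_lt M (one_lt_inv₀ hq0 |>.mpr hq1)
  refine ⟨1 - k, ?_⟩
  rwa [show (1 - k : ℤ) - 1 = -k by ring, zpow_neg, zpow_natCast, ← inv_pow]

/-- Every compact set `K ⊆ ℝ` is contained in the image of `Z((T))_{r,≤c}` under the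
evaluation map `θ_{r'} : ∑ aₙ Tⁿ ↦ ∑ aₙ (r')ⁿ` for some `c > 0`: every `x ∈ K` admits
an expansion `x = ∑_{n≫−∞} aₙ (r')ⁿ` with integer coefficients satisfying
`|aₙ| < 1 + 1/r'` and `∑ |aₙ| rⁿ ≤ c`. -/
theorem compact_subset_image_theta (r r' : ℝ) (h0 : 0 < r') (h1 : r' < r) (h2 : r < 1)
    (K : Set ℝ) (hK : IsCompact K) :
    ∃ c > 0, ∀ x ∈ K, ∃ a : ℤ → ℤ,
      (∃ N : ℤ, ∀ n < N, a n = 0) ∧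
      (∀ n : ℤ, |(a n : ℝ)| < 1 + 1 / r') ∧
      Summable (fun n : ℤ => |(a n : ℝ)| * r ^ n) ∧
      (∑' n : ℤ, |(a n : ℝ)| * r ^ n ≤ c) ∧
      HasSum (fun n : ℤ => (a n : ℝ) * r' ^ n) x := by
  have hr0 : 0 < r := h0.trans h1
  have hr'1 : r' < 1 := h1.trans h2
  obtain ⟨M, hM⟩ := hK.isBounded.exists_norm_le
  obtain ⟨N, hN⟩ := exists_zpow_pred_gt h0 hr'1 M
  have hB : 0 < 1 + 1 / r' := by positivity
  refine ⟨r ^ N * ((1 + 1 / r') / (1 - r)), by have := sub_pos.mpr h2; positivity, ?_⟩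
  intro x hx
  set t := x / r' ^ N
  have ht : |t| < 1 / r' := by
    rw [abs_div, abs_of_pos (zpow_pos h0 N), div_lt_div_iff₀ (zpow_pos h0 N) h0, one_mul]
    calc |x| * r' < r' ^ (N - 1) * r' := mul_lt_mul_of_pos_right ((hM x hx).trans_lt hN) h0
      _ = r' ^ N := by rw [← zpow_add_one₀ h0.ne', sub_add_cancel]
  have hdigits := abs_betaDigit_lt h0 ht
  obtain ⟨s, hs, hsum⟩ := exists_hasSum_abs_mul_pow_le hr0.le h2 fun j ↦ (hdigits j).le
  have habs := hasSum_laurentCoeff_mul_zpow N (betaDigit r' t) (φ := fun k ↦ |(k : ℝ)|)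
    (by simp) hr0.ne' hsum
  have hval := hasSum_laurentCoeff_mul_zpow N (betaDigit r' t) (φ := fun k ↦ (k : ℝ))
    (by simp) h0.ne' (hasSum_betaDigit_mul_pow h0 hr'1 ht)
  refine ⟨laurentCoeff N (betaDigit r' t), ⟨N, fun n ↦ laurentCoeff_of_lt _⟩,
    abs_laurentCoeff_lt hB hdigits, habs.summable, ?_, ?_⟩
  · rw [habs.tsum_eq]
    exact mul_le_mul_of_nonneg_left hs (zpow_pos hr0 N).le
  · rwa [mul_div_cancel₀ x (zpow_pos h0 N).ne'] at hval
end

section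
/- Every nonzero real number x can be expanded as x = Σ_{n ≥ N} a_n (r')^n for some N ∈ ℤ and integers a_n with |a_n| < 1 + 1/r', where 0 < r' < 1 is fixed; moreover N can be chosen so that (r')^N ≤ |x|, and the construction is by a greedy algorithm: choose n minimal with (r')^n ≤ |x|, pick a_n ∈ ℤ with |x/(r')^n − a_n| < 1, replace x by x − a_n (r')^n, and iterate. -/
/-!
Choose `N` with `r ^ N ≤ |x| < r ^ (N - 1)`. Going down the levels `m = N, N + 1, …`, subtract
from the current remainder `y` the integer multiple `round (y / r ^ m) * r ^ m` of `r ^ m`. What is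
left has size at most `r ^ m / 2 < r ^ m`, so on reaching level `m` we always have
`|y| < r ^ (m - 1)`. This bounds every digit by `1 / r + 1 / 2 < 1 + 1 / r` and makes the
remainders decay geometrically, so the subtracted terms sum to `x`.
-/

open Filter Topology

lemma hasSum_int_of_hasSum_nat_add {M : Type*} [AddCommMonoid M] [TopologicalSpace M]
    {f : ℤ → M} {a : M} (N : ℤ) (hf : ∀ n < N, f n = 0)
    (h : HasSum (fun k : ℕ => f (N + k)) a) : HasSum f a := by
  have hinj : Function.Injective (fun k : ℕ => N + k) := fun i j hij => by simpa using hij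
  refine (hinj.hasSum_iff fun n hn => hf n ?_).mp h
  by_contra! hle
  exact hn ⟨(n - N).toNat, by simp only; omega⟩

lemma exists_zpow_le_and_lt_zpow_sub_one {r y : ℝ} (h0 : 0 < r) (h1 : r < 1) (hy : 0 < y) :
    ∃ N : ℤ, r ^ N ≤ y ∧ y < r ^ (N - 1) := by
  obtain ⟨n, hle, hlt⟩ := exists_mem_Ico_zpow hy (one_lt_inv₀ h0 |>.mpr h1)
  refine ⟨-n, ?_, ?_⟩
  · rwa [zpow_neg, ← inv_zpow]
  · rwa [← neg_add', zpow_neg, ← inv_zpow]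

namespace GreedyExpansion

variable {r : ℝ}

noncomputable def digit (r : ℝ) (m : ℤ) (y : ℝ) : ℤ := round (y / r ^ m)

lemma abs_sub_digit_mul_zpow_le (h0 : 0 < r) (m : ℤ) (y : ℝ) :
    |y - digit r m y * r ^ m| ≤ r ^ m / 2 := by
  have hpow : 0 < r ^ m := zpow_pos h0 m
  have hfactor : y - digit r m y * r ^ m = (y / r ^ m - round (y / r ^ m)) * r ^ m := by
    unfold digit
    field_simp
  rw [hfactor, abs_mul, abs_of_pos hpow]
  nlinarith [abs_sub_round (y / r ^ m)]

lemma abs_digit_lt (h0 : 0 < r) {m : ℤ} {y : ℝ} (hy : |y| < r ^ (m - 1)) :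
    |(digit r m y : ℝ)| < 1 + 1 / r := by
  have hpow : 0 < r ^ m := zpow_pos h0 m
  have hquot : |y / r ^ m| < 1 / r := by
    rwa [abs_div, abs_of_pos hpow, div_lt_iff₀ hpow, one_div_mul_eq_div, div_eq_mul_inv, ← zpow_sub_one₀ h0.ne']
  have hround : |(round (y / r ^ m) : ℝ)| - |y / r ^ m| ≤ 1 / 2 :=
    (abs_sub_abs_le_abs_sub _ _).trans (abs_sub_comm (y / r ^ m) _ ▸ abs_sub_round _)
  unfold digit
  linarith

noncomputable def remainder (r : ℝ) (N : ℤ) (x : ℝ) : ℕ → ℝ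
  | 0 => x
  | k + 1 => remainder r N x k - digit r (N + k) (remainder r N x k) * r ^ (N + k)

noncomputable def digits (r : ℝ) (N : ℤ) (x : ℝ) (k : ℕ) : ℤ :=
  digit r (N + k) (remainder r N x k)

lemma sub_remainder_eq_sum (N : ℤ) (x : ℝ) (k : ℕ) :
    x - remainder r N x k = ∑ j ∈ Finset.range k, (digits r N x j : ℝ) * r ^ (N + j) := by
  induction k with
  | zero => simp [remainder]
  | succ k ih =>
    rw [Finset.sum_range_succ, ← ih, remainder, digits]
    ring

variable {N : ℤ} {x : ℝ}

lemma abs_remainder_lt (h0 : 0 < r) (hx : |x| < r ^ (N - 1)) (k : ℕ) :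
    |remainder r N x k| < r ^ (N + k - 1) := by
  cases k with
  | zero => simpa [remainder] using hx
  | succ k =>
    have hpow : 0 < r ^ (N + k) := zpow_pos h0 _
    calc |remainder r N x (k + 1)| ≤ r ^ (N + k) / 2 := abs_sub_digit_mul_zpow_le h0 _ _
      _ < r ^ (N + k) := half_lt_self hpow
      _ = r ^ (N + ↑(k + 1) - 1) := by push_cast; ring_nf

lemma abs_digits_lt (h0 : 0 < r) (hx : |x| < r ^ (N - 1)) (k : ℕ) :
    |(digits r N x k : ℝ)| < 1 + 1 / r :=
  abs_digit_lt h0 (abs_remainder_lt h0 hx k)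

lemma tendsto_remainder (h0 : 0 < r) (h1 : r < 1) (hx : |x| < r ^ (N - 1)) :
    Tendsto (remainder r N x) atTop (𝓝 0) := by
  have hbound (k : ℕ) : ‖remainder r N x k‖ ≤ r ^ (N - 1) * r ^ k := by
    have := abs_remainder_lt h0 hx k
    rw [show N + k - 1 = (N - 1) + k by ring, zpow_add₀ h0.ne', zpow_natCast] at this
    exact this.le
  refine squeeze_zero_norm hbound ?_
  simpa using (tendsto_pow_atTop_nhds_zero_of_lt_one h0.le h1).const_mul (r ^ (N - 1))

lemma hasSum_digits_mul_zpow (h0 : 0 < r) (h1 : r < 1) (hx : |x| < r ^ (N - 1)) :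
    HasSum (fun k : ℕ => (digits r N x k : ℝ) * r ^ (N + k)) x := by
  have hbound (k : ℕ) : ‖(digits r N x k : ℝ) * r ^ (N + k)‖ ≤ ((1 + 1 / r) * r ^ N) * r ^ k := by
    rw [norm_mul, Real.norm_eq_abs, Real.norm_of_nonneg (zpow_pos h0 _).le, zpow_add₀ h0.ne',
      zpow_natCast, mul_assoc]
    exact mul_le_mul_of_nonneg_right (abs_digits_lt h0 hx k).le (by positivity)
  have hsum : Summable fun k : ℕ => (digits r N x k : ℝ) * r ^ (N + k) :=
    .of_norm_bounded ((summable_geometric_of_lt_one h0.le h1).mul_left _) hbound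
  rw [hsum.hasSum_iff_tendsto_nat]
  simpa [← sub_remainder_eq_sum] using (tendsto_remainder h0 h1 hx).const_sub x

noncomputable def coeff (r : ℝ) (N : ℤ) (x : ℝ) (n : ℤ) : ℤ :=
  if N ≤ n then digits r N x (n - N).toNat else 0

lemma coeff_of_lt {n : ℤ} (hn : n < N) : coeff r N x n = 0 := if_neg hn.not_ge

lemma coeff_add_natCast (k : ℕ) : coeff r N x (N + k) = digits r N x k := by
  simp [coeff]

lemma abs_coeff_lt (h0 : 0 < r) (hx : |x| < r ^ (N - 1)) (n : ℤ) :
    |(coeff r N x n : ℝ)| < 1 + 1 / r := by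
  unfold coeff
  split_ifs
  · exact abs_digits_lt h0 hx _
  · simp only [Int.cast_zero, abs_zero]
    positivity

end GreedyExpansion

open GreedyExpansion in
/-- Greedy expansion: for fixed `0 < r' < 1`, every nonzero real `x` can be written as
`x = ∑_{n ≥ N} aₙ (r')ⁿ` with integer coefficients `|aₙ| < 1 + 1/r'`, where `N` can be
chosen with `(r')^N ≤ |x|`. -/
theorem greedy_expansion (r' : ℝ) (h0 : 0 < r') (h1 : r' < 1) (x : ℝ) (hx : x ≠ 0) :
    ∃ (N : ℤ) (a : ℤ → ℤ),
      (∀ n < N, a n = 0) ∧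
      (∀ n : ℤ, |(a n : ℝ)| < 1 + 1 / r') ∧
      r' ^ N ≤ |x| ∧
      HasSum (fun n : ℤ => (a n : ℝ) * r' ^ n) x := by
  obtain ⟨N, hNle, hNlt⟩ := exists_zpow_le_and_lt_zpow_sub_one h0 h1 (abs_pos.mpr hx)
  refine ⟨N, coeff r' N x, fun n => coeff_of_lt, abs_coeff_lt h0 hNlt, hNle, ?_⟩
  refine hasSum_int_of_hasSum_nat_add N (fun n hn => by simp [coeff_of_lt hn]) ?_
  simpa only [coeff_add_natCast] using hasSum_digits_mul_zpow h0 h1 hNlt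
end

section
/- Let 0 < r < 1 and let S be a set. The set Z((T))_r(S) of Laurent series Σ_{n≫−∞} a_n T^n with coefficients a_n : S → ℤ such that sup_{s∈S} Σ_n |a_n(s)| r^n < ∞ forms a commutative ring under coefficientwise addition and convolution multiplication, and for each s ∈ S evaluation at s gives a ring homomorphism to the ring Z((T))_r(*) = { Σ a_n T^n : a_n ∈ ℤ, Σ|a_n| r^n < ∞ }, which is an integral domain. -/
/-- `Z((T))_r(S)`: Laurent series whose coefficients are integer-valued functions on
`S`, with support bounded below and a uniform weighted ℓ¹ bound. -/
def ZTrSec (r : ℝ) (S : Type*) : Set (ℤ → S → ℤ) :=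
  {a | (∃ N : ℤ, ∀ n < N, a n = 0) ∧
    ∃ c : ℝ, ∀ s : S, Summable (fun n : ℤ => |(a n s : ℝ)| * r ^ n) ∧
      ∑' n : ℤ, |(a n s : ℝ)| * r ^ n ≤ c}

/-- `Z((T))_r(*)`: integer Laurent series with support bounded below and finite
weighted ℓ¹ norm. -/
def ZTrPt (r : ℝ) : Set (ℤ → ℤ) :=
  {a | (∃ N : ℤ, ∀ n < N, a n = 0) ∧
    Summable (fun n : ℤ => |(a n : ℝ)| * r ^ n)}

/-- Convolution multiplication on `S`-valued coefficients. -/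
noncomputable def convSec {S : Type*} (a b : ℤ → S → ℤ) : ℤ → S → ℤ :=
  fun n s => ∑' k : ℤ, a k s * b (n - k) s

/-- Convolution multiplication on integer coefficients. -/
noncomputable def convPt (a b : ℤ → ℤ) : ℤ → ℤ :=
  fun n => ∑' k : ℤ, a k * b (n - k)

/-!
Coefficient sequences with support bounded below are elements of `LaurentSeries ℤ`, and
`convPt` computes the coefficients of their product there, so commutativity, associativity,
distributivity and the absence of zero divisors are inherited from that integral domain.
Closure under multiplication is submultiplicativity of the weighted ℓ¹ norm: since
`r ^ n = r ^ k * r ^ (n - k)`, the weighted absolute values of a convolution are bounded by the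
convolution of the weighted absolute values, whose total sum is the product of the two sums.
Multiplication in `Z((T))_r(S)` is `convPt` one `s ∈ S` at a time.
-/

open Function HahnSeries

theorem hasSum_tsum_mul_sub_of_nonneg {G : Type*} [AddCommGroup G] {f g : G → ℝ}
    (hf0 : 0 ≤ f) (hg0 : 0 ≤ g) (hf : Summable f) (hg : Summable g) :
    HasSum (fun n => ∑' k, f k * g (n - k)) ((∑' k, f k) * ∑' k, g k) := by
  let e : G × G ≃ G × G :=
    { toFun := fun p => (p.1 + p.2, p.1)
      invFun := fun q => (q.2, q.1 - q.2)
      left_inv := fun p => by simp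
      right_inv := fun q => by simp }
  have hprod : Summable fun p : G × G => f p.1 * g p.2 := hf.mul_of_nonneg hg hf0 hg0
  have hfib : HasSum (fun q : G × G => f q.2 * g (q.1 - q.2)) ((∑' k, f k) * ∑' k, g k) := by
    have hcomp : (fun q : G × G => f q.2 * g (q.1 - q.2)) ∘ e = fun p => f p.1 * g p.2 :=
      funext fun p => by simp [e]
    rw [← e.hasSum_iff, hcomp, hf.tsum_mul_tsum hg hprod]
    exact hprod.hasSum
  have hrows := ((summable_prod_of_nonneg fun q => mul_nonneg (hf0 _) (hg0 _)).1 hfib.summable).1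
  exact hfib.prod_fiberwise fun n => (hrows n).hasSum

theorem exists_add_eq_zero_of_lt {M : Type*} [AddZeroClass M] {a b : ℤ → M}
    (ha : ∃ N, ∀ n < N, a n = 0) (hb : ∃ N, ∀ n < N, b n = 0) :
    ∃ N, ∀ n < N, (a + b) n = 0 :=
  let ⟨N, hN⟩ := ha; let ⟨M, hM⟩ := hb
  ⟨min N M, fun n hn => by rw [Pi.add_apply, hN n (by omega), hM n (by omega), add_zero]⟩

theorem convPt_eq_sum_Icc {a b : ℤ → ℤ} {N M : ℤ} (hN : ∀ n < N, a n = 0)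
    (hM : ∀ n < M, b n = 0) (n : ℤ) :
    convPt a b n = ∑ k ∈ Finset.Icc N (n - M), a k * b (n - k) := by
  refine tsum_eq_sum fun k hk => ?_
  rcases lt_or_ge k N with h | h
  · rw [hN k h, zero_mul]
  · rw [hM _ (by simp at hk; omega), mul_zero]

theorem convPt_eq_zero_of_lt {a b : ℤ → ℤ} {N M : ℤ} (hN : ∀ n < N, a n = 0)
    (hM : ∀ n < M, b n = 0) : ∀ n < N + M, convPt a b n = 0 := fun n hn => by
  rw [convPt_eq_sum_Icc hN hM, Finset.Icc_eq_empty (by omega), Finset.sum_empty]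

theorem exists_convPt_eq_zero_of_lt {a b : ℤ → ℤ} (ha : ∃ N, ∀ n < N, a n = 0)
    (hb : ∃ N, ∀ n < N, b n = 0) : ∃ N, ∀ n < N, convPt a b n = 0 :=
  let ⟨N, hN⟩ := ha; let ⟨M, hM⟩ := hb; ⟨N + M, convPt_eq_zero_of_lt hN hM⟩

theorem convPt_comm (a b : ℤ → ℤ) : convPt a b = convPt b a := funext fun n =>
  ((Equiv.subLeft n).tsum_eq _).symm.trans (tsum_congr fun k => by simp [mul_comm])

noncomputable def toLaurent (a : ℤ → ℤ) (ha : ∃ N, ∀ n < N, a n = 0) : LaurentSeries ℤ :=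
  ofSuppBddBelow a (ha.elim fun N hN => ⟨N, fun n hn => not_lt.1 fun h => hn (hN n h)⟩)

theorem coeff_toLaurent_mul {a b : ℤ → ℤ} (ha : ∃ N, ∀ n < N, a n = 0)
    (hb : ∃ N, ∀ n < N, b n = 0) : (toLaurent a ha * toLaurent b hb).coeff = convPt a b := by
  funext n
  rw [coeff_mul, convPt, tsum_eq_sum' (s := (Finset.antidiagonal (toLaurent a ha).isPWO_support
      (toLaurent b hb).isPWO_support n).image Prod.fst),
    Finset.sum_image]
  · refine Finset.sum_congr rfl fun p hp => ?_
    obtain ⟨-, -, hpn⟩ := Finset.mem_antidiagonal.1 hp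
    rw [← hpn, add_sub_cancel_left]
    rfl
  · intro p hp q hq hpq
    have hp := (Finset.mem_antidiagonal.1 hp).2.2
    have hq := (Finset.mem_antidiagonal.1 hq).2.2
    exact Prod.ext hpq (by omega)
  · intro k hk
    exact Finset.mem_image.2 ⟨(k, n - k), Finset.mem_antidiagonal.2
      ⟨left_ne_zero_of_mul hk, right_ne_zero_of_mul hk, add_sub_cancel _ _⟩, rfl⟩

theorem toLaurent_convPt {a b : ℤ → ℤ} (ha : ∃ N, ∀ n < N, a n = 0)
    (hb : ∃ N, ∀ n < N, b n = 0) :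
    toLaurent (convPt a b) (exists_convPt_eq_zero_of_lt ha hb) = toLaurent a ha * toLaurent b hb :=
  HahnSeries.ext (coeff_toLaurent_mul ha hb).symm

theorem convPt_assoc {a b c : ℤ → ℤ} (ha : ∃ N, ∀ n < N, a n = 0)
    (hb : ∃ N, ∀ n < N, b n = 0) (hc : ∃ N, ∀ n < N, c n = 0) :
    convPt (convPt a b) c = convPt a (convPt b c) := by
  rw [← coeff_toLaurent_mul (exists_convPt_eq_zero_of_lt ha hb) hc,
    ← coeff_toLaurent_mul ha (exists_convPt_eq_zero_of_lt hb hc), toLaurent_convPt ha hb,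
    toLaurent_convPt hb hc, mul_assoc]

theorem convPt_add {a b c : ℤ → ℤ} (ha : ∃ N, ∀ n < N, a n = 0)
    (hb : ∃ N, ∀ n < N, b n = 0) (hc : ∃ N, ∀ n < N, c n = 0) :
    convPt a (b + c) = convPt a b + convPt a c := by
  have hbc := exists_add_eq_zero_of_lt hb hc
  have : toLaurent (b + c) hbc = toLaurent b hb + toLaurent c hc := rfl
  rw [← coeff_toLaurent_mul ha hbc, ← coeff_toLaurent_mul ha hb, ← coeff_toLaurent_mul ha hc,
    this, mul_add, coeff_add']

theorem eq_zero_or_eq_zero_of_convPt_eq_zero {a b : ℤ → ℤ} (ha : ∃ N, ∀ n < N, a n = 0)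
    (hb : ∃ N, ∀ n < N, b n = 0) (h : convPt a b = 0) : a = 0 ∨ b = 0 := by
  have : toLaurent a ha * toLaurent b hb = 0 := HahnSeries.ext ((coeff_toLaurent_mul ha hb).trans h)
  simpa only [toLaurent, mul_eq_zero, ofSuppBddBelow_eq_zero] using this

section WeightedNorm

noncomputable def weightedAbs (r : ℝ) (a : ℤ → ℤ) (n : ℤ) : ℝ := |(a n : ℝ)| * r ^ n

variable {r : ℝ}

theorem weightedAbs_nonneg (hr : 0 ≤ r) (a : ℤ → ℤ) : 0 ≤ weightedAbs r a :=
  fun n => mul_nonneg (abs_nonneg _) (zpow_nonneg hr n)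

theorem weightedAbs_add_le (hr : 0 ≤ r) (a b : ℤ → ℤ) :
    weightedAbs r (a + b) ≤ weightedAbs r a + weightedAbs r b := fun n => by
  simp only [weightedAbs, Pi.add_apply, Int.cast_add, ← add_mul]
  exact mul_le_mul_of_nonneg_right (abs_add_le _ _) (zpow_nonneg hr n)

theorem weightedAbs_convPt_le (hr : 0 < r) {a b : ℤ → ℤ} {N M : ℤ} (hN : ∀ n < N, a n = 0)
    (hM : ∀ n < M, b n = 0) (n : ℤ) :
    weightedAbs r (convPt a b) n ≤ ∑' k, weightedAbs r a k * weightedAbs r b (n - k) := by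
  have hsupp : ∀ k ∉ Finset.Icc N (n - M), weightedAbs r a k * weightedAbs r b (n - k) = 0 := by
    intro k hk
    rcases lt_or_ge k N with h | h
    · simp [weightedAbs, hN k h]
    · simp [weightedAbs, hM (n - k) (by simp at hk; omega)]
  rw [tsum_eq_sum hsupp, weightedAbs, convPt_eq_sum_Icc hN hM, Int.cast_sum]
  refine (mul_le_mul_of_nonneg_right (Finset.abs_sum_le_sum_abs _ _) (zpow_nonneg hr.le n)).trans ?_
  rw [Finset.sum_mul]
  refine Finset.sum_le_sum fun k _ => le_of_eq ?_
  rw [weightedAbs, weightedAbs, Int.cast_mul, abs_mul]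
  rw [show r ^ n = r ^ k * r ^ (n - k) by rw [← zpow_add₀ hr.ne', add_sub_cancel]]
  ring

theorem summable_weightedAbs_add (hr : 0 ≤ r) {a b : ℤ → ℤ} (ha : Summable (weightedAbs r a))
    (hb : Summable (weightedAbs r b)) : Summable (weightedAbs r (a + b)) :=
  (ha.add hb).of_nonneg_of_le (weightedAbs_nonneg hr _) (weightedAbs_add_le hr a b)

theorem tsum_weightedAbs_add_le (hr : 0 ≤ r) {a b : ℤ → ℤ} (ha : Summable (weightedAbs r a))
    (hb : Summable (weightedAbs r b)) :
    ∑' n, weightedAbs r (a + b) n ≤ ∑' n, weightedAbs r a n + ∑' n, weightedAbs r b n :=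
  ((summable_weightedAbs_add hr ha hb).tsum_le_tsum (weightedAbs_add_le hr a b)
    (ha.add hb)).trans_eq (ha.tsum_add hb)

theorem hasSum_weightedAbs_conv (hr : 0 ≤ r) {a b : ℤ → ℤ} (ha : Summable (weightedAbs r a))
    (hb : Summable (weightedAbs r b)) :
    HasSum (fun n => ∑' k, weightedAbs r a k * weightedAbs r b (n - k))
      ((∑' n, weightedAbs r a n) * ∑' n, weightedAbs r b n) :=
  hasSum_tsum_mul_sub_of_nonneg (weightedAbs_nonneg hr a) (weightedAbs_nonneg hr b) ha hb

theorem summable_weightedAbs_convPt (hr : 0 < r) {a b : ℤ → ℤ} {N M : ℤ}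
    (hN : ∀ n < N, a n = 0) (hM : ∀ n < M, b n = 0) (ha : Summable (weightedAbs r a))
    (hb : Summable (weightedAbs r b)) : Summable (weightedAbs r (convPt a b)) :=
  (hasSum_weightedAbs_conv hr.le ha hb).summable.of_nonneg_of_le (weightedAbs_nonneg hr.le _)
    (weightedAbs_convPt_le hr hN hM)

theorem tsum_weightedAbs_convPt_le (hr : 0 < r) {a b : ℤ → ℤ} {N M : ℤ}
    (hN : ∀ n < N, a n = 0) (hM : ∀ n < M, b n = 0) (ha : Summable (weightedAbs r a))
    (hb : Summable (weightedAbs r b)) :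
    ∑' n, weightedAbs r (convPt a b) n ≤ (∑' n, weightedAbs r a n) * ∑' n, weightedAbs r b n :=
  ((summable_weightedAbs_convPt hr hN hM ha hb).tsum_le_tsum (weightedAbs_convPt_le hr hN hM)
    (hasSum_weightedAbs_conv hr.le ha hb).summable).trans_eq
    (hasSum_weightedAbs_conv hr.le ha hb).tsum_eq

end WeightedNorm

section Sections

variable {r : ℝ} {S : Type*}

theorem exists_eval_eq_zero_of_lt {a : ℤ → S → ℤ} (ha : ∃ N, ∀ n < N, a n = 0) (s : S) :
    ∃ N, ∀ n < N, a n s = 0 :=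
  let ⟨N, hN⟩ := ha
  ⟨N, fun n hn => congrFun (hN n hn) s⟩

theorem eval_mem_ZTrPt {a : ℤ → S → ℤ} (ha : a ∈ ZTrSec r S) (s : S) :
    (fun n => a n s) ∈ ZTrPt r :=
  let ⟨h0, _, hc⟩ := ha
  ⟨exists_eval_eq_zero_of_lt h0 s, (hc s).1⟩

theorem add_mem_ZTrSec (hr : 0 ≤ r) {a b : ℤ → S → ℤ} (ha : a ∈ ZTrSec r S)
    (hb : b ∈ ZTrSec r S) : a + b ∈ ZTrSec r S := by
  obtain ⟨ha0, ca, hca⟩ := ha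
  obtain ⟨hb0, cb, hcb⟩ := hb
  refine ⟨exists_add_eq_zero_of_lt ha0 hb0, ca + cb, fun s => ⟨?_, ?_⟩⟩
  · exact summable_weightedAbs_add hr (hca s).1 (hcb s).1
  · exact (tsum_weightedAbs_add_le hr (hca s).1 (hcb s).1).trans (add_le_add (hca s).2 (hcb s).2)

theorem convSec_apply (a b : ℤ → S → ℤ) (n : ℤ) (s : S) :
    convSec a b n s = convPt (fun n => a n s) (fun n => b n s) n :=
  rfl

theorem convSec_mem_ZTrSec (hr : 0 < r) {a b : ℤ → S → ℤ} (ha : a ∈ ZTrSec r S)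
    (hb : b ∈ ZTrSec r S) : convSec a b ∈ ZTrSec r S := by
  obtain ⟨⟨N, hN⟩, ca, hca⟩ := ha
  obtain ⟨⟨M, hM⟩, cb, hcb⟩ := hb
  have hNs (s : S) : ∀ n < N, a n s = 0 := fun n hn => congrFun (hN n hn) s
  have hMs (s : S) : ∀ n < M, b n s = 0 := fun n hn => congrFun (hM n hn) s
  refine ⟨⟨N + M, fun n hn => funext fun s => convPt_eq_zero_of_lt (hNs s) (hMs s) n hn⟩,
    ca * cb, fun s => ?_⟩
  simp only [convSec_apply]
  refine ⟨summable_weightedAbs_convPt hr (hNs s) (hMs s) (hca s).1 (hcb s).1, ?_⟩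
  have hb_nonneg : 0 ≤ ∑' n, weightedAbs r (fun n => b n s) n :=
    tsum_nonneg (weightedAbs_nonneg hr.le _)
  have hca_nonneg : 0 ≤ ca := (tsum_nonneg (weightedAbs_nonneg hr.le _)).trans (hca s).2
  exact (tsum_weightedAbs_convPt_le hr (hNs s) (hMs s) (hca s).1 (hcb s).1).trans
    (mul_le_mul (hca s).2 (hcb s).2 hb_nonneg hca_nonneg)

theorem convSec_comm (a b : ℤ → S → ℤ) : convSec a b = convSec b a :=
  funext fun n => funext fun s => congrFun (convPt_comm (fun n => a n s) (fun n => b n s)) n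

theorem convSec_assoc {a b c : ℤ → S → ℤ} (ha : ∃ N, ∀ n < N, a n = 0)
    (hb : ∃ N, ∀ n < N, b n = 0) (hc : ∃ N, ∀ n < N, c n = 0) :
    convSec (convSec a b) c = convSec a (convSec b c) :=
  funext fun n => funext fun s => congrFun (convPt_assoc (exists_eval_eq_zero_of_lt ha s)
    (exists_eval_eq_zero_of_lt hb s) (exists_eval_eq_zero_of_lt hc s)) n

theorem convSec_add {a b c : ℤ → S → ℤ} (ha : ∃ N, ∀ n < N, a n = 0)
    (hb : ∃ N, ∀ n < N, b n = 0) (hc : ∃ N, ∀ n < N, c n = 0) :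
    convSec a (b + c) = convSec a b + convSec a c :=
  funext fun n => funext fun s => congrFun (convPt_add (exists_eval_eq_zero_of_lt ha s)
    (exists_eval_eq_zero_of_lt hb s) (exists_eval_eq_zero_of_lt hc s)) n

end Sections

theorem ZTrSec_ring_general (r : ℝ) (hr0 : 0 < r) (S : Type*) :
    (∀ a ∈ ZTrSec r S, ∀ b ∈ ZTrSec r S, a + b ∈ ZTrSec r S) ∧
    (∀ a ∈ ZTrSec r S, ∀ b ∈ ZTrSec r S, convSec a b ∈ ZTrSec r S) ∧
    (∀ a ∈ ZTrSec r S, ∀ b ∈ ZTrSec r S, convSec a b = convSec b a) ∧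
    (∀ a ∈ ZTrSec r S, ∀ b ∈ ZTrSec r S, ∀ c ∈ ZTrSec r S,
      convSec (convSec a b) c = convSec a (convSec b c)) ∧
    (∀ a ∈ ZTrSec r S, ∀ b ∈ ZTrSec r S, ∀ c ∈ ZTrSec r S,
      convSec a (b + c) = convSec a b + convSec a c) ∧
    (∀ (s : S), ∀ a ∈ ZTrSec r S, (fun n => a n s) ∈ ZTrPt r) ∧
    (∀ (s : S), ∀ a ∈ ZTrSec r S, ∀ b ∈ ZTrSec r S,
      (fun n => (a + b) n s) = (fun n => a n s) + (fun n => b n s)) ∧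
    (∀ (s : S), ∀ a ∈ ZTrSec r S, ∀ b ∈ ZTrSec r S,
      (fun n => convSec a b n s) = convPt (fun n => a n s) (fun n => b n s)) ∧
    (∀ a ∈ ZTrPt r, ∀ b ∈ ZTrPt r, convPt a b = 0 → a = 0 ∨ b = 0) :=
  ⟨fun _ ha _ hb => add_mem_ZTrSec hr0.le ha hb,
    fun _ ha _ hb => convSec_mem_ZTrSec hr0 ha hb,
    fun a _ b _ => convSec_comm a b,
    fun _ ha _ hb _ hc => convSec_assoc ha.1 hb.1 hc.1,
    fun _ ha _ hb _ hc => convSec_add ha.1 hb.1 hc.1,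
    fun s _ ha => eval_mem_ZTrPt ha s,
    fun _ _ _ _ _ => rfl,
    fun _ _ _ _ _ => rfl,
    fun _ ha _ hb => eq_zero_or_eq_zero_of_convPt_eq_zero ha.1 hb.1⟩

/-- `Z((T))_r(S)` is a commutative ring under coefficientwise addition and convolution
multiplication, evaluation at each `s ∈ S` is a ring homomorphism into `Z((T))_r(*)`,
and `Z((T))_r(*)` is an integral domain (has no zero divisors). -/
theorem ZTrSec_ring (r : ℝ) (hr0 : 0 < r) (hr1 : r < 1) (S : Type*) :
    (∀ a ∈ ZTrSec r S, ∀ b ∈ ZTrSec r S, a + b ∈ ZTrSec r S) ∧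
    (∀ a ∈ ZTrSec r S, ∀ b ∈ ZTrSec r S, convSec a b ∈ ZTrSec r S) ∧
    (∀ a ∈ ZTrSec r S, ∀ b ∈ ZTrSec r S, convSec a b = convSec b a) ∧
    (∀ a ∈ ZTrSec r S, ∀ b ∈ ZTrSec r S, ∀ c ∈ ZTrSec r S,
      convSec (convSec a b) c = convSec a (convSec b c)) ∧
    (∀ a ∈ ZTrSec r S, ∀ b ∈ ZTrSec r S, ∀ c ∈ ZTrSec r S,
      convSec a (b + c) = convSec a b + convSec a c) ∧
    (∀ (s : S), ∀ a ∈ ZTrSec r S, (fun n => a n s) ∈ ZTrPt r) ∧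
    (∀ (s : S), ∀ a ∈ ZTrSec r S, ∀ b ∈ ZTrSec r S,
      (fun n => (a + b) n s) = (fun n => a n s) + (fun n => b n s)) ∧
    (∀ (s : S), ∀ a ∈ ZTrSec r S, ∀ b ∈ ZTrSec r S,
      (fun n => convSec a b n s) = convPt (fun n => a n s) (fun n => b n s)) ∧
    (∀ a ∈ ZTrPt r, ∀ b ∈ ZTrPt r, convPt a b = 0 → a = 0 ∨ b = 0) :=
  ZTrSec_ring_general r hr0 S
end

section
/- Let 0 < r' < r < 1 and let S be an extremally disconnected compact Hausdorff space. Then the map θ_{r'} : Z((T))_r(S) → C(S, ℝ) sending Σ a_n T^n (with a_n ∈ C(S,ℤ)) to the function s ↦ Σ_n a_n(s)(r')^n is a surjective group homomorphism. -/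
/-- `Z((T))_r(S)` for a profinite/extremally disconnected `S`: Laurent series with
continuous integer-valued coefficient functions, support bounded below, and a uniform
weighted ℓ¹ bound `∀ s, ∑ |aₙ(s)| rⁿ ≤ c` for some `c > 0`. -/
def ZTrCond (r : ℝ) (S : Type*) [TopologicalSpace S] : Set (ℤ → C(S, ℤ)) :=
  {a | (∃ N : ℤ, ∀ n < N, a n = 0) ∧
    ∃ c : ℝ, ∀ s : S, Summable (fun n : ℤ => |(a n s : ℝ)| * r ^ n) ∧
      ∑' n : ℤ, |(a n s : ℝ)| * r ^ n ≤ c}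

/-! A continuous `f : S → ℝ` is expanded greedily in base `r'⁻¹`: approximate `f` within `1`
by a continuous integer-valued `a₀` (possible since locally constant functions are dense in
`C(S, ℝ)` by Stone–Weierstrass), then expand `(f - a₀) / r'` in the same way. The remainders stay
bounded by `max ‖f‖ r'⁻¹`, so the digits are uniformly bounded and `∑ aₙ Tⁿ` lies in
`Z((T))_r(S)` for every `r < 1`. -/

open Filter Topology Finset

lemma summable_abs_mul_pow_of_abs_le {ρ C : ℝ} (hρ0 : 0 ≤ ρ) (hρ1 : ρ < 1) {c : ℕ → ℝ}
    (hc : ∀ n, |c n| ≤ C) : Summable fun n => |c n| * ρ ^ n :=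
  .of_nonneg_of_le (fun n => by positivity) (fun n => by gcongr; exact hc n)
    ((summable_geometric_of_lt_one hρ0 hρ1).mul_left C)

lemma tsum_abs_mul_pow_le {ρ C : ℝ} (hρ0 : 0 ≤ ρ) (hρ1 : ρ < 1) {c : ℕ → ℝ}
    (hc : ∀ n, |c n| ≤ C) : ∑' n, |c n| * ρ ^ n ≤ C * (1 - ρ)⁻¹ := by
  rw [← tsum_geometric_of_lt_one hρ0 hρ1, ← tsum_mul_left]
  exact (summable_abs_mul_pow_of_abs_le hρ0 hρ1 hc).tsum_le_tsum (fun n => by gcongr; exact hc n)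
    ((summable_geometric_of_lt_one hρ0 hρ1).mul_left C)

/-- `d` is a digit sequence of `x 0` in base `ρ⁻¹`, `x n` being the remainder after `n` digits. -/
structure IsDigitExpansion (ρ : ℝ) (x d : ℕ → ℝ) : Prop where
  step : ∀ n, x (n + 1) = ρ⁻¹ * (x n - d n)
  abs_sub_le : ∀ n, |x n - d n| ≤ 1

namespace IsDigitExpansion

variable {ρ : ℝ} {x d : ℕ → ℝ}

lemma abs_le_max (h : IsDigitExpansion ρ x d) (hρ : 0 < ρ) (n : ℕ) : |x n| ≤ max |x 0| ρ⁻¹ := by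
  cases n with
  | zero => exact le_max_left _ _
  | succ n =>
    rw [h.step, abs_mul, abs_of_pos (inv_pos.mpr hρ)]
    calc ρ⁻¹ * |x n - d n| ≤ ρ⁻¹ * 1 := by gcongr; exact h.abs_sub_le n
      _ ≤ max |x 0| ρ⁻¹ := by rw [mul_one]; exact le_max_right _ _

lemma abs_digit_le (h : IsDigitExpansion ρ x d) (hρ : 0 < ρ) (n : ℕ) :
    |d n| ≤ max |x 0| ρ⁻¹ + 1 :=
  calc |d n| = |x n - (x n - d n)| := by rw [sub_sub_cancel]
    _ ≤ |x n| + |x n - d n| := abs_sub _ _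
    _ ≤ max |x 0| ρ⁻¹ + 1 := add_le_add (h.abs_le_max hρ n) (h.abs_sub_le n)

lemma sub_sum_eq_pow_mul (h : IsDigitExpansion ρ x d) (hρ : ρ ≠ 0) (n : ℕ) :
    x 0 - ∑ m ∈ range n, d m * ρ ^ m = ρ ^ n * x n := by
  induction n with
  | zero => simp
  | succ n ih =>
    rw [sum_range_succ, ← sub_sub, ih, h.step, pow_succ]
    field_simp

lemma hasSum (h : IsDigitExpansion ρ x d) (hρ0 : 0 < ρ) (hρ1 : ρ < 1) :
    HasSum (fun n => d n * ρ ^ n) (x 0) := by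
  have hnorm : Summable fun n => ‖d n * ρ ^ n‖ := by
    simpa [abs_mul, abs_of_pos hρ0] using
      summable_abs_mul_pow_of_abs_le hρ0.le hρ1 (h.abs_digit_le hρ0)
  rw [hasSum_iff_tendsto_nat_of_summable_norm hnorm]
  have hrem : Tendsto (fun n => ρ ^ n * x n) atTop (𝓝 0) := by
    refine squeeze_zero_norm (fun n => ?_) (by
      simpa using (tendsto_pow_atTop_nhds_zero_of_lt_one hρ0.le hρ1).mul_const (max |x 0| ρ⁻¹))
    rw [Real.norm_eq_abs, abs_mul, abs_of_pos (pow_pos hρ0 n)]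
    gcongr
    exact h.abs_le_max hρ0 n
  have hpartial n : ∑ m ∈ range n, d m * ρ ^ m = x 0 - ρ ^ n * x n := by
    rw [← h.sub_sum_eq_pow_mul hρ0.ne' n, sub_sub_cancel]
  simpa [hpartial] using (tendsto_const_nhds (x := x 0)).sub hrem

end IsDigitExpansion

section ContinuousDigits

variable {S : Type*} [TopologicalSpace S]

lemma summable_mul_zpow_of_mem_ZTrCond {r r' : ℝ} (h0 : 0 < r') (h1 : r' ≤ r) {a : ℤ → C(S, ℤ)}
    (ha : a ∈ ZTrCond r S) (s : S) : Summable fun n : ℤ => (a n s : ℝ) * r' ^ n := by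
  obtain ⟨⟨N, hN⟩, c, hc⟩ := ha
  have hr : 0 < r := h0.trans_le h1
  refine .of_norm_bounded ((hc s).1.mul_left ((r' / r) ^ N)) fun n => ?_
  rcases lt_or_ge n N with hn | hn
  · simp [hN n hn]
  have hpow : (r' / r) ^ n ≤ (r' / r) ^ N :=
    zpow_le_zpow_right_of_le_one₀ (div_pos h0 hr) (div_le_one_of_le₀ h1 hr.le) hn
  calc ‖(a n s : ℝ) * r' ^ n‖ = (r' / r) ^ n * (|(a n s : ℝ)| * r ^ n) := by
        rw [Real.norm_eq_abs, abs_mul, abs_of_pos (zpow_pos h0 n), div_zpow]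
        field_simp
    _ ≤ (r' / r) ^ N * (|(a n s : ℝ)| * r ^ n) := by gcongr

lemma hasSum_extend_natCast_iff {d : ℕ → C(S, ℤ)} (s : S) (F : ℤ → ℤ → ℝ)
    (hF : ∀ n, F n 0 = 0) {x : ℝ} :
    HasSum (fun n : ℤ => F n (Function.extend ((↑) : ℕ → ℤ) d 0 n s)) x ↔
      HasSum (fun m : ℕ => F m (d m s)) x := by
  rw [← Nat.cast_injective.hasSum_iff fun n hn => by simp [Function.extend_apply' _ _ _ hn, hF]]
  simp [Function.comp_def, Nat.cast_injective.extend_apply]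

lemma extend_natCast_mem_ZTrCond {r C : ℝ} (hr0 : 0 ≤ r) (hr1 : r < 1) {d : ℕ → C(S, ℤ)}
    (hd : ∀ n s, |(d n s : ℝ)| ≤ C) : Function.extend ((↑) : ℕ → ℤ) d 0 ∈ ZTrCond r S := by
  refine ⟨⟨0, fun n hn => Function.extend_apply' _ _ _ ?_⟩, C * (1 - r)⁻¹, fun s => ?_⟩
  · rintro ⟨m, rfl⟩
    omega
  have hsum := (hasSum_extend_natCast_iff s (fun n k => |(k : ℝ)| * r ^ n) (by simp)).mpr
    (by simpa using (summable_abs_mul_pow_of_abs_le hr0 hr1 (hd · s)).hasSum)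
  exact ⟨hsum.summable, hsum.tsum_eq ▸ tsum_abs_mul_pow_le hr0 hr1 (hd · s)⟩

variable [CompactSpace S] [TotallySeparatedSpace S]

lemma exists_intCast_near (g : C(S, ℝ)) : ∃ a : C(S, ℤ), ∀ s, |g s - a s| < 1 := by
  obtain ⟨⟨_, h, rfl⟩, hh⟩ := ContinuousMap.exists_mem_subalgebra_near_continuousMap_of_separatesPoints
    _ (LocallyConstant.separatesPoints_range_toContinuousMapAlgHom ℝ) g (1 / 2) (by norm_num)
  refine ⟨h.map round, fun s => ?_⟩
  have hs : |h s - g s| < 1 / 2 := (ContinuousMap.norm_coe_le_norm _ s).trans_lt hh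
  calc |g s - round (h s)| ≤ |h s - g s| + |h s - round (h s)| := by
        rw [abs_sub_comm (h s)]; exact abs_sub_le _ _ _
    _ < 1 / 2 + 1 / 2 := add_lt_add_of_lt_of_le hs (abs_sub_round _)
    _ = 1 := by norm_num

noncomputable def intApprox (g : C(S, ℝ)) : C(S, ℤ) := (exists_intCast_near g).choose

noncomputable def digitRemainder (ρ : ℝ) (f : C(S, ℝ)) : ℕ → C(S, ℝ)
  | 0 => f
  | n + 1 => ρ⁻¹ • (digitRemainder ρ f n -
      (ContinuousMap.mk ((↑) : ℤ → ℝ) continuous_of_discreteTopology).comp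
        (intApprox (digitRemainder ρ f n)))

lemma isDigitExpansion_digitRemainder (ρ : ℝ) (f : C(S, ℝ)) (s : S) :
    IsDigitExpansion ρ (fun n => digitRemainder ρ f n s)
      (fun n => intApprox (digitRemainder ρ f n) s) where
  step _ := rfl
  abs_sub_le n := ((exists_intCast_near (digitRemainder ρ f n)).choose_spec s).le

end ContinuousDigits

/-- For `0 < r' < r < 1` and `S` an extremally disconnected compact Hausdorff space,
the map `θ_{r'} : Z((T))_r(S) → C(S, ℝ)`, `∑ aₙ Tⁿ ↦ (s ↦ ∑ aₙ(s)(r')ⁿ)`, is a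
surjective group homomorphism (it is additive and every continuous real-valued
function on `S` lifts). -/
theorem theta_surjective_hom (r r' : ℝ) (h0 : 0 < r') (h1 : r' < r) (h2 : r < 1)
    (S : Type*) [TopologicalSpace S] [CompactSpace S] [T2Space S]
    [ExtremallyDisconnected S] :
    (∀ a ∈ ZTrCond r S, ∀ b ∈ ZTrCond r S, ∀ s : S,
      ∑' n : ℤ, ((a + b) n s : ℝ) * r' ^ n =
        (∑' n : ℤ, (a n s : ℝ) * r' ^ n) + ∑' n : ℤ, (b n s : ℝ) * r' ^ n) ∧
    (∀ f : C(S, ℝ), ∃ a ∈ ZTrCond r S,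
      ∀ s : S, HasSum (fun n : ℤ => (a n s : ℝ) * r' ^ n) (f s)) := by
  refine ⟨fun a ha b hb s => ?_, fun f => ?_⟩
  · simp only [Pi.add_apply, ContinuousMap.add_apply, Int.cast_add, add_mul]
    exact (summable_mul_zpow_of_mem_ZTrCond h0 h1.le ha s).tsum_add
      (summable_mul_zpow_of_mem_ZTrCond h0 h1.le hb s)
  have hexp := isDigitExpansion_digitRemainder r' f
  have hdigit n s : |(intApprox (digitRemainder r' f n) s : ℝ)| ≤ max ‖f‖ r'⁻¹ + 1 := by
    refine ((hexp s).abs_digit_le h0 n).trans ?_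
    gcongr
    exact f.norm_coe_le_norm s
  refine ⟨_, extend_natCast_mem_ZTrCond (h0.trans h1).le h2 hdigit, fun s => ?_⟩
  refine (hasSum_extend_natCast_iff s (fun n k => (k : ℝ) * r' ^ n) (by simp)).mpr ?_
  simpa [digitRemainder] using (hexp s).hasSum h0 (h1.trans h2)
end

section
/- Let S be an extremally disconnected compact Hausdorff space, 0 < r < 1, c > 0, δ ∈ (0,1). Then the set C(S, Z((T))_{r,≤c}) of continuous maps into the T-adic space Z((T))_{r,≤c} is in natural bijection with { Σ_{n≫−∞} a_n T^n : a_n ∈ C(S,ℤ), ∀s ∈ S, Σ_n |a_n(s)| r^n ≤ c }; i.e., a map S → Z((T))_{r,≤c} is continuous if and only if each coefficient function a_n : S → ℤ is continuous, and the lower bound on the support can be chosen uniformly in s. -/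
/-!
The basic open sets of the `T`-adic topology constrain the coefficients only up to some index.
Below a uniform support bound `N` every series has zero coefficients, so such a constraint
involves only the finitely many coefficients of index between `N` and that index, each of
which is continuous. Conversely, the sets `{s | F s vanishes below N}` are open and increase as
`N` decreases, so by compactness one of them is all of `S`.
-/

attribute [local instance] tadicTopology

namespace ZTrc

variable {r c : ℝ}

theorem isOpen_setOf_forall_le_coeff_eq (f : ZTrc r c) (N : ℤ) :
    IsOpen {g : ZTrc r c | ∀ n ≤ N, (g : ℤ → ℤ) n = (f : ℤ → ℤ) n} :=
  TopologicalSpace.isOpen_generateFrom_of_mem ⟨f, N, rfl⟩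

theorem continuous_coeff (n : ℤ) : Continuous fun g : ZTrc r c => (g : ℤ → ℤ) n := by
  refine continuous_discrete_rng.2 fun k => isOpen_iff_forall_mem_open.2 fun f hf => ?_
  refine ⟨_, fun g hg => ?_, isOpen_setOf_forall_le_coeff_eq f n, fun _ _ => rfl⟩
  exact (hg n le_rfl).trans hf

theorem isOpen_setOf_forall_lt_coeff_eq_zero (N : ℤ) :
    IsOpen {g : ZTrc r c | ∀ n < N, (g : ℤ → ℤ) n = 0} := by
  refine isOpen_iff_forall_mem_open.2 fun f hf => ?_
  refine ⟨_, fun g hg n hn => ?_, isOpen_setOf_forall_le_coeff_eq f (N - 1), fun _ _ => rfl⟩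
  rw [hg n (by omega), hf n hn]

theorem exists_forall_coeff_eq_zero_of_continuous {S : Type*} [TopologicalSpace S]
    [CompactSpace S] {F : S → ZTrc r c} (hF : Continuous F) :
    ∃ N : ℤ, ∀ s : S, ∀ n < N, (F s : ℤ → ℤ) n = 0 := by
  let U : ℤ → Set S := fun N => F ⁻¹' {g | ∀ n < N, (g : ℤ → ℤ) n = 0}
  have hU_antitone : Antitone U := fun N M hMN s hs n hn => hs n (by omega)
  have hU_cover : Set.univ ⊆ ⋃ N, U N := fun s _ => Set.mem_iUnion.2 (F s).2.1
  obtain ⟨N, hN⟩ := isCompact_univ.elim_directed_cover U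
    (fun N => (isOpen_setOf_forall_lt_coeff_eq_zero N).preimage hF) hU_cover
    hU_antitone.directed_le
  exact ⟨N, fun s => hN (Set.mem_univ s)⟩

theorem continuous_of_continuous_coeff {S : Type*} [TopologicalSpace S] {F : S → ZTrc r c}
    (hF : ∀ n : ℤ, Continuous fun s => (F s : ℤ → ℤ) n) {N : ℤ}
    (hN : ∀ s : S, ∀ n < N, (F s : ℤ → ℤ) n = 0) : Continuous F := by
  refine continuous_generateFrom_iff.2 ?_
  rintro _ ⟨f, M, rfl⟩
  have hpreimage : F ⁻¹' {g | ∀ n ≤ M, (g : ℤ → ℤ) n = (f : ℤ → ℤ) n} =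
      (⋂ n ∈ Finset.Icc N M, {s | (F s : ℤ → ℤ) n = (f : ℤ → ℤ) n}) ∩
        {_s | ∀ n < N, n ≤ M → (f : ℤ → ℤ) n = 0} := by
    ext s
    simp only [Set.mem_preimage, Set.mem_inter_iff, Set.mem_iInter, Set.mem_ofPred_eq,
      Finset.mem_Icc]
    constructor
    · intro h
      exact ⟨fun n hn => h n hn.2, fun n hnN hnM => (h n hnM).symm.trans (hN s n hnN)⟩
    · rintro ⟨h, hf⟩ n hnM
      rcases lt_or_ge n N with hnN | hnN
      · rw [hN s n hnN, hf n hnN hnM]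
      · exact h n ⟨hnN, hnM⟩
  rw [hpreimage]
  exact (isOpen_biInter_finset fun n _ =>
    (isOpen_discrete {(f : ℤ → ℤ) n}).preimage (hF n)).inter isOpen_const

end ZTrc

open ZTrc in
theorem continuous_into_ZTrc_iff_general (r c : ℝ)
    (S : Type*) [TopologicalSpace S] [CompactSpace S] (F : S → ZTrc r c) :
    @Continuous S (ZTrc r c) _ (tadicTopology r c) F ↔
      ((∀ n : ℤ, Continuous fun s => (F s : ℤ → ℤ) n) ∧
        ∃ N : ℤ, ∀ s : S, ∀ n < N, (F s : ℤ → ℤ) n = 0) := by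
  exact ⟨fun hF => ⟨fun n => (continuous_coeff n).comp hF,
      exists_forall_coeff_eq_zero_of_continuous hF⟩,
    fun ⟨hF, _, hN⟩ => continuous_of_continuous_coeff hF hN⟩

/-- For an extremally disconnected compact Hausdorff space `S`, a map
`F : S → Z((T))_{r,≤c}` is continuous for the `T`-adic topology if and only if each
coefficient function `s ↦ aₙ(s)` is continuous and the lower bound on the support can
be chosen uniformly in `s`; this identifies `C(S, Z((T))_{r,≤c})` with
`{∑ aₙ Tⁿ : aₙ ∈ C(S,ℤ), ∀ s, ∑ |aₙ(s)| rⁿ ≤ c}`. -/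
theorem continuous_into_ZTrc_iff (r c δ : ℝ) (hr0 : 0 < r) (hr1 : r < 1) (hc : 0 < c)
    (hδ0 : 0 < δ) (hδ1 : δ < 1)
    (S : Type*) [TopologicalSpace S] [CompactSpace S] [T2Space S]
    [ExtremallyDisconnected S] (F : S → ZTrc r c) :
    @Continuous S (ZTrc r c) _ (tadicTopology r c) F ↔
      ((∀ n : ℤ, Continuous fun s => (F s : ℤ → ℤ) n) ∧
        ∃ N : ℤ, ∀ s : S, ∀ n < N, (F s : ℤ → ℤ) n = 0) :=
  continuous_into_ZTrc_iff_general r c S F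
end
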